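/- arXiv:2208.03935 — 14 statements merged into one kernel-verified Lean document; each statement's English description precedes it below -/
import Mathlib

section
/- For every pair of states i, j, the geometric-allocation flow satisfies 0 ≤ v_{ij} and v_{ij} ≤ min(π_i, π_j). In particular, p_{i→j} := v_{ij}/π_i lies in [0,1]. -/
/-- The geometric-allocation stochastic flow determined by the periodic shift `s`
of the cumulative weight tower of `π`.  Here states are `0`-indexed, so
`F i = ∑ k ≤ i, π k` plays the role of `F_i` and `∑ k < j, π k` plays the role
of `F_{j-1}`, and `W = ∑ k, π k = F_n`. -/
noncomputable def gaFlow {n : ℕ} (π : Fin n → ℝ) (s : ℝ) (i j : Fin n) : ℝ :=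
  let W : ℝ := ∑ k, π k
  let Δ : ℝ := (∑ k ∈ Finset.Iic i, π k) - (∑ k ∈ Finset.Iio j, π k) + s
  max 0 (min (min Δ (π i + π j - Δ)) (min (π i) (π j))) +
    max 0 (min (min (Δ - W) (π i + π j + W - Δ)) (min (π i) (π j)))

/-- the geometric-allocation flow satisfies `0 ≤ v i j ≤ min (π i) (π j)`;
in particular the transition probability `p (i→j) = v i j / π i` lies in `[0,1]`. -/
theorem gaFlow_nonneg_le_min {n : ℕ} (hn : 1 ≤ n) (π : Fin n → ℝ)
    (hπ : ∀ i, 0 < π i) (s : ℝ) (hs : 0 < s) (hsW : s < ∑ k, π k) (i j : Fin n) :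
    0 ≤ gaFlow π s i j ∧ gaFlow π s i j ≤ min (π i) (π j) ∧
      0 ≤ gaFlow π s i j / π i ∧ gaFlow π s i j / π i ≤ 1 := by
  have hiW : π i ≤ ∑ k, π k :=
    Finset.single_le_sum (fun k _ => (hπ k).le) (Finset.mem_univ i)
  have hjW : π j ≤ ∑ k, π k :=
    Finset.single_le_sum (fun k _ => (hπ k).le) (Finset.mem_univ j)
  have hmin : (0:ℝ) ≤ min (π i) (π j) := le_min (hπ i).le (hπ j).le
  have h0 : (0:ℝ) ≤ gaFlow π s i j := by
    unfold gaFlow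
    exact add_nonneg (le_max_left _ _) (le_max_left _ _)
  have hle : gaFlow π s i j ≤ min (π i) (π j) := by
    unfold gaFlow
    set W : ℝ := ∑ k, π k with hW
    set Δ : ℝ := (∑ k ∈ Finset.Iic i, π k) - (∑ k ∈ Finset.Iio j, π k) + s with hΔ
    dsimp only
    rcases le_or_gt (min (min (Δ - W) (π i + π j + W - Δ)) (min (π i) (π j))) 0 with hB | hB
    · rw [max_eq_left hB, add_zero]
      exact max_le hmin (min_le_right _ _)
    · rcases le_or_gt (min (min Δ (π i + π j - Δ)) (min (π i) (π j))) 0 with hA | hA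
      · rw [max_eq_left hA, zero_add]
        exact max_le hmin (min_le_right _ _)
      · rw [max_eq_right hA.le, max_eq_right hB.le]
        have h1 : min (min Δ (π i + π j - Δ)) (min (π i) (π j)) ≤ π i + π j - Δ :=
          le_trans (min_le_left _ _) (min_le_right _ _)
        have h2 : min (min (Δ - W) (π i + π j + W - Δ)) (min (π i) (π j)) ≤ Δ - W :=
          le_trans (min_le_left _ _) (min_le_left _ _)
        have := add_le_add h1 h2
        rw [le_min_iff]
        constructor <;> linarith
  refine ⟨h0, hle, div_nonneg h0 (hπ i).le, ?_⟩
  rw [div_le_one (hπ i)]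
  exact hle.trans (min_le_left _ _)
end

section
/- For every state i, the row sums of the geometric-allocation flow satisfy Σ_{j=1}^{n} v_{ij} = π_i. Consequently the transition probabilities p_{i→j} = v_{ij}/π_i sum to 1 over j, i.e. the kernel is a stochastic matrix. -/
set_option maxHeartbeats 2000000 in
lemma gaClamp (a b c d : ℝ) (hab : a ≤ b) (hcd : c ≤ d) :
    max 0 (min (min (b - c) (d - a)) (min (b - a) (d - c)))
      = min b (max a d) - min b (max a c) := by
  simp only [max_def, min_def]
  split_ifs <;> linarith

lemma gaSumIio {n : ℕ} (π : Fin n → ℝ) (j : Fin n) :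
    ∑ k ∈ Finset.Iio j, π k
      = ∑ k ∈ Finset.range j.val, (fun m => if h : m < n then π ⟨m, h⟩ else 0) k := by
  refine Finset.sum_bij' (fun (k : Fin n) _ => (k : ℕ))
    (fun m hm => (⟨m, lt_trans (Finset.mem_range.mp hm) j.2⟩ : Fin n)) ?_ ?_ ?_ ?_ ?_
  · intro a ha; simpa [Finset.mem_range] using (Finset.mem_Iio.mp ha)
  · intro m hm; simp [Finset.mem_Iio, Fin.lt_def, Finset.mem_range.mp hm]
  · intro a ha; simp
  · intro m hm; simp
  · intro a ha; simp [a.2]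

lemma gaSumIic {n : ℕ} (π : Fin n → ℝ) (i : Fin n) :
    ∑ k ∈ Finset.Iic i, π k
      = ∑ k ∈ Finset.range (i.val + 1), (fun m => if h : m < n then π ⟨m, h⟩ else 0) k := by
  refine Finset.sum_bij' (fun (k : Fin n) _ => (k : ℕ))
    (fun m hm => (⟨m, lt_of_lt_of_le (Finset.mem_range.mp hm) i.2⟩ : Fin n)) ?_ ?_ ?_ ?_ ?_
  · intro a ha; simpa [Finset.mem_range, Nat.lt_succ_iff] using (Finset.mem_Iic.mp ha)
  · intro m hm; simp [Finset.mem_Iic, Fin.le_def, Nat.lt_succ_iff.mp (Finset.mem_range.mp hm)]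
  · intro a ha; simp
  · intro m hm; simp
  · intro a ha; simp [a.2]



/-- the row sums of the geometric-allocation flow equal the weights,
so the transition probabilities `p (i→j) = v i j / π i` sum to one over `j`. -/
theorem gaFlow_row_sum {n : ℕ} (hn : 1 ≤ n) (π : Fin n → ℝ)
    (hπ : ∀ i, 0 < π i) (s : ℝ) (hs : 0 < s) (hsW : s < ∑ k, π k) (i : Fin n) :
    (∑ j, gaFlow π s i j = π i) ∧ (∑ j, gaFlow π s i j / π i = 1) := by
  classical
  set p : ℕ → ℝ := fun m => if h : m < n then π ⟨m, h⟩ else 0 with hp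
  set T : ℕ → ℝ := fun m => ∑ k ∈ Finset.range m, p k with hTdef
  have hpk : ∀ (k : Fin n), p k.val = π k := by
    intro k; simp [hp, k.2]
  have hp0 : ∀ m, 0 ≤ p m := by
    intro m; by_cases h : m < n <;> simp [hp, h, le_of_lt (hπ _)]
  have hTstep : ∀ m, T (m + 1) = T m + p m := fun m => Finset.sum_range_succ _ m
  have hTmono : Monotone T := fun x y hxy =>
    Finset.sum_le_sum_of_subset_of_nonneg (Finset.range_subset_range.2 hxy) fun k _ _ => hp0 k
  have hT0 : T 0 = 0 := by simp [hTdef]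
  have hWT : (∑ k, π k) = T n := by
    rw [show T n = ∑ k ∈ Finset.range n, p k from rfl,
      ← Fin.sum_univ_eq_sum_range p n]
    exact (Finset.sum_congr rfl fun k _ => (hpk k).symm)
  have hIio : ∀ j : Fin n, (∑ k ∈ Finset.Iio j, π k) = T j.val := by
    intro j; rw [gaSumIio π j]
  have hIic : (∑ k ∈ Finset.Iic i, π k) = T (i.val + 1) := by
    rw [gaSumIic π i]
  set W := T n with hWdef
  set a := T i.val + s with hadef
  set b := T (i.val + 1) + s with hbdef
  have hπi : π i = b - a := by
    have h := hTstep i.val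
    rw [hpk i] at h
    rw [hbdef, hadef]; linarith
  have hab : a ≤ b := by have := hπ i; linarith
  have ha0 : (0 : ℝ) ≤ a := by
    have h1 : (0 : ℝ) ≤ T i.val := Finset.sum_nonneg fun k _ => hp0 k
    rw [hadef]; linarith
  have hsW' : s < W := hWT ▸ hsW
  have hbW : b ≤ W + W := by
    have h1 : T (i.val + 1) ≤ T n := hTmono i.2
    rw [hbdef]
    have h2 : W = T n := hWdef
    linarith
  set f : ℝ → ℝ := fun x => min b (max a x) with hfdef
  have key : ∀ j : Fin n, gaFlow π s i j
      = (f (T (j.val + 1)) - f (T j.val)) + (f (T (j.val + 1) + W) - f (T j.val + W)) := by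
    intro j
    have hj := hTstep j.val
    rw [hpk j] at hj
    have hπj : π j = T (j.val + 1) - T j.val := by linarith
    have hcd : T j.val ≤ T (j.val + 1) := by have := hπ j; linarith
    have hcd' : T j.val + W ≤ T (j.val + 1) + W := by linarith
    have e1 := gaClamp a b (T j.val) (T (j.val + 1)) hab hcd
    have e2 := gaClamp a b (T j.val + W) (T (j.val + 1) + W) hab hcd'
    have hf1 : f (T (j.val + 1)) = min b (max a (T (j.val + 1))) := rfl
    have hf2 : f (T j.val) = min b (max a (T j.val)) := rfl
    have hf3 : f (T (j.val + 1) + W) = min b (max a (T (j.val + 1) + W)) := rfl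
    have hf4 : f (T j.val + W) = min b (max a (T j.val + W)) := rfl
    rw [hf1, hf2, hf3, hf4, ← e1, ← e2]
    simp only [gaFlow, hIic, hIio j, hWT]
    rw [hπi, hπj, hbdef, hadef]
    ring_nf
  have hsum : ∑ j, gaFlow π s i j = π i := by
    rw [Finset.sum_congr rfl fun j _ => key j]
    rw [Finset.sum_add_distrib]
    have h1 : ∑ j : Fin n, (f (T (j.val + 1)) - f (T j.val))
        = f (T n) - f (T 0) := by
      rw [Fin.sum_univ_eq_sum_range (fun m => f (T (m + 1)) - f (T m)) n]
      exact Finset.sum_range_sub (fun m => f (T m)) n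
    have h2 : ∑ j : Fin n, (f (T (j.val + 1) + W) - f (T j.val + W))
        = f (T n + W) - f (T 0 + W) := by
      rw [Fin.sum_univ_eq_sum_range (fun m => f (T (m + 1) + W) - f (T m + W)) n]
      exact Finset.sum_range_sub (fun m => f (T m + W)) n
    rw [h1, h2, hT0, ← hWdef, zero_add]
    have hf0 : f 0 = a := by
      show min b (max a 0) = a
      rw [max_eq_left ha0, min_eq_right hab]
    have hfWW : f (W + W) = b := by
      show min b (max a (W + W)) = b
      rw [max_eq_right (by linarith : a ≤ W + W), min_eq_left hbW]
    rw [hf0, hfWW, hπi]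
    ring
  refine ⟨hsum, ?_⟩
  rw [← Finset.sum_div, hsum, div_self (ne_of_gt (hπ i))]
end

section
/- For every state i, the column sums of the geometric-allocation flow satisfy Σ_{j=1}^{n} v_{ji} = π_i. Hence the transition kernel p_{j→i} = v_{ji}/π_j satisfies the global balance condition π_i = Σ_j π_j p_{j→i} for every i and every shift parameter s ∈ (0, W). -/
set_option maxHeartbeats 1000000 in
private theorem overlapKey (a b p q : ℝ) (hp : 0 ≤ p) (hq : 0 ≤ q) :
    max 0 (min (min (a + p - b) (b + q - a)) (min p q)) =
      max b (min (a + p) (b + q)) - max b (min a (b + q)) := by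
  simp only [max_def, min_def]
  split_ifs <;> linarith

private theorem natIicRange (m : ℕ) : Finset.Iic m = Finset.range (m + 1) := by
  ext k; simp [Nat.lt_succ_iff]



set_option maxHeartbeats 4000000 in
/-- the column sums of the geometric-allocation flow equal the weights,
hence the kernel `p (j→i) = v j i / π j` satisfies global balance with respect to `π`. -/
theorem gaFlow_col_sum_global_balance {n : ℕ} (hn : 1 ≤ n) (π : Fin n → ℝ)
    (hπ : ∀ i, 0 < π i) (s : ℝ) (hs : 0 < s) (hsW : s < ∑ k, π k) (i : Fin n) :
    (∑ j, gaFlow π s j i = π i) ∧ (π i = ∑ j, π j * (gaFlow π s j i / π j)) := by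
  set W : ℝ := ∑ k, π k with hWdef
  set f : ℕ → ℝ := fun k => if h : k < n then π ⟨k, h⟩ else 0 with hf
  set P : ℕ → ℝ := fun m => ∑ k ∈ Finset.range m, f k with hP
  have hfval : ∀ j : Fin n, f j.val = π j := by
    intro j; simp [hf, j.isLt]
  have hfnn : ∀ k, 0 ≤ f k := by
    intro k; by_cases h : k < n <;> simp [hf, h] <;> exact (hπ _).le
  have hPstep : ∀ m, P (m + 1) = P m + f m := fun m => Finset.sum_range_succ f m
  have hA : ∀ j : Fin n, ∑ k ∈ Finset.Iio j, π k = P j.val := by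
    intro j
    have h1 : ∑ k ∈ Finset.map Fin.valEmbedding (Finset.Iio j), f k
        = ∑ k ∈ Finset.Iio j, π k := by
      rw [Finset.sum_map]; exact Finset.sum_congr rfl fun k _ => hfval k
    rw [Fin.map_valEmbedding_Iio, Nat.Iio_eq_range] at h1
    exact h1.symm
  have hB : ∀ j : Fin n, ∑ k ∈ Finset.Iic j, π k = P (j.val + 1) := by
    intro j
    have h1 : ∑ k ∈ Finset.map Fin.valEmbedding (Finset.Iic j), f k
        = ∑ k ∈ Finset.Iic j, π k := by
      rw [Finset.sum_map]; exact Finset.sum_congr rfl fun k _ => hfval k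
    rw [Fin.map_valEmbedding_Iic, natIicRange] at h1
    exact h1.symm
  have hWP : W = P n := by
    rw [hWdef]
    calc ∑ k : Fin n, π k = ∑ k : Fin n, f k.val :=
          Finset.sum_congr rfl fun k _ => (hfval k).symm
      _ = ∑ k ∈ Finset.range n, f k := Fin.sum_univ_eq_sum_range f n
  set b : ℝ := P i.val - s with hb
  set q : ℝ := π i with hq
  set g : ℝ → ℝ := fun x => max b (min x (b + q)) with hg
  set g2 : ℝ → ℝ := fun x => max (b + W) (min x (b + W + q)) with hg2
  have hterm : ∀ j : Fin n, gaFlow π s j i =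
      (g (P (j.val + 1)) - g (P j.val)) + (g2 (P (j.val + 1)) - g2 (P j.val)) := by
    intro j
    have hΔ : (∑ k ∈ Finset.Iic j, π k) - (∑ k ∈ Finset.Iio i, π k) + s
        = P j.val + π j - b := by
      rw [hB j, hA i, hPstep j.val, hfval j, hb]; ring
    have h1 := overlapKey (P j.val) b (π j) q (hπ j).le (hπ i).le
    have h2 := overlapKey (P j.val) (b + W) (π j) q (hπ j).le (hπ i).le
    have hap : P j.val + π j = P (j.val + 1) := by rw [hPstep, hfval]
    simp only [gaFlow, ← hWdef, hΔ]
    rw [min_comm (π j) (π i), ← hq, hg, hg2, ← hap]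
    ring_nf
    ring_nf at h1 h2
    rw [min_comm (π j) q] at h1 h2
    linarith [h1, h2]
  have hsum1 : ∑ j, gaFlow π s j i = π i := by
    have htel : ∑ j : Fin n, ((g (P (j.val + 1)) - g (P j.val)) +
        (g2 (P (j.val + 1)) - g2 (P j.val)))
        = (g (P n) + g2 (P n)) - (g (P 0) + g2 (P 0)) := by
      rw [Fin.sum_univ_eq_sum_range
        (fun m => (g (P (m + 1)) - g (P m)) + (g2 (P (m + 1)) - g2 (P m))) n]
      have h := Finset.sum_range_sub (fun m => g (P m) + g2 (P m)) n
      rw [← h]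
      exact Finset.sum_congr rfl fun m _ => by ring
    rw [Finset.sum_congr rfl (fun j _ => hterm j), htel]
    have hP0 : P 0 = 0 := by simp [hP]
    have hPi : 0 ≤ P i.val := Finset.sum_nonneg fun k _ => hfnn k
    have hPiq : P i.val + q ≤ P n := by
      have h2 : P (i.val + 1) ≤ P n :=
        Finset.sum_le_sum_of_subset_of_nonneg
          (Finset.range_subset_range.mpr i.isLt) (fun k _ _ => hfnn k)
      rw [hPstep, hfval] at h2; exact h2
    have hWpos : 0 < W := lt_trans hs hsW
    have hqpos : 0 < q := hπ i
    rw [hP0]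
    simp only [hg, hg2, max_def, min_def]
    split_ifs <;> linarith
  refine ⟨hsum1, ?_⟩
  rw [hq, ← hsum1]
  exact Finset.sum_congr rfl fun j _ => by
    rw [mul_comm, div_mul_cancel₀ _ (hπ j).ne']
end

section
/- If the shift parameter is chosen as s = W/2, then the geometric-allocation flow is symmetric: v_{ij} = v_{ji} for all states i, j. Consequently the transition kernel p_{i→j} = v_{ij}/π_i satisfies the detailed balance condition π_i p_{i→j} = π_j p_{j→i} for all i, j. -/
lemma gaFlow_aux (p q W Δ : ℝ) :
    max 0 (min (min Δ (p + q - Δ)) (min p q)) +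
      max 0 (min (min (Δ - W) (p + q + W - Δ)) (min p q)) =
    max 0 (min (min (p + q + W - Δ) (q + p - (p + q + W - Δ))) (min q p)) +
      max 0 (min (min ((p + q + W - Δ) - W) (q + p + W - (p + q + W - Δ))) (min q p)) := by
  have h1 : q + p - (p + q + W - Δ) = Δ - W := by ring
  have h2 : (p + q + W - Δ) - W = p + q - Δ := by ring
  have h3 : q + p + W - (p + q + W - Δ) = Δ := by ring
  rw [h1, h2, h3, min_comm q p, min_comm (p + q + W - Δ) (Δ - W),
    min_comm (p + q - Δ) Δ, add_comm]

/-- with the shift `s = W / 2` the geometric-allocation flow is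
symmetric, hence the kernel `p (i→j) = v i j / π i` satisfies detailed balance. -/
theorem gaFlow_half_shift_symm_detailed_balance {n : ℕ} (hn : 1 ≤ n)
    (π : Fin n → ℝ) (hπ : ∀ i, 0 < π i) (i j : Fin n) :
    gaFlow π ((∑ k, π k) / 2) i j = gaFlow π ((∑ k, π k) / 2) j i ∧
      π i * (gaFlow π ((∑ k, π k) / 2) i j / π i) =
        π j * (gaFlow π ((∑ k, π k) / 2) j i / π j) := by
  have hIic : ∀ k : Fin n, ∑ m ∈ Finset.Iic k, π m = ∑ m ∈ Finset.Iio k, π m + π k := by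
    intro k
    rw [← Finset.Iio_insert, Finset.sum_insert (by simp)]
    ring
  have hsymm : gaFlow π ((∑ k, π k) / 2) i j = gaFlow π ((∑ k, π k) / 2) j i := by
    simp only [gaFlow]
    rw [hIic i, hIic j]
    set W := ∑ k, π k with hW
    set Ai := ∑ m ∈ Finset.Iio i, π m with hAi
    set Bj := ∑ m ∈ Finset.Iio j, π m with hBj
    rw [show Bj + π j - Ai + W / 2 = π i + π j + W - (Ai + π i - Bj + W / 2) from by ring]
    exact gaFlow_aux (π i) (π j) W (Ai + π i - Bj + W / 2)
  refine ⟨hsymm, ?_⟩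
  rw [mul_div_cancel₀ _ (hπ i).ne', mul_div_cancel₀ _ (hπ j).ne', hsymm]
end

section
/- For every state i and every shift parameter s ∈ (0, W), the diagonal (rejection) flow of the geometric-allocation kernel has the closed form v_{ii} = max(0, π_i − s) + max(0, π_i + s − W). -/
/-- closed form for the diagonal (rejection) flow:
`v i i = max 0 (π i - s) + max 0 (π i + s - W)`. -/
theorem gaFlow_diag_closed_form {n : ℕ} (hn : 1 ≤ n) (π : Fin n → ℝ)
    (hπ : ∀ i, 0 < π i) (s : ℝ) (hs : 0 < s) (hsW : s < ∑ k, π k) (i : Fin n) :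
    gaFlow π s i i = max 0 (π i - s) + max 0 (π i + s - ∑ k, π k) := by
  have hIic : (∑ k ∈ Finset.Iic i, π k) = π i + ∑ k ∈ Finset.Iio i, π k := by
    rw [← Finset.Iio_insert, Finset.sum_insert (by simp)]
  set W := ∑ k, π k with hW
  have hpi := hπ i
  unfold gaFlow
  dsimp only
  rw [hIic]
  have hΔ : π i + (∑ k ∈ Finset.Iio i, π k) - (∑ k ∈ Finset.Iio i, π k) + s = π i + s := by ring
  rw [hΔ]
  have ha : π i + π i - (π i + s) = π i - s := by ring
  have h1 : min (min (π i + s) (π i + π i - (π i + s))) (min (π i) (π i)) = π i - s := by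
    rw [ha, min_eq_right (show π i - s ≤ π i + s by linarith), min_self,
      min_eq_left (show π i - s ≤ π i by linarith)]
  have h2 : min (min (π i + s - W) (π i + π i + W - (π i + s))) (min (π i) (π i)) = π i + s - W := by
    rw [min_eq_left (show π i + s - W ≤ π i + π i + W - (π i + s) by linarith), min_self,
      min_eq_left (show π i + s - W ≤ π i by linarith)]
  rw [h1, h2]
end

section
/- Let π_max = max_i π_i. For a shift parameter s ∈ (0, W), the geometric-allocation kernel is rejection-free (v_{ii} = 0 for all i) if and only if π_max ≤ s and s ≤ W − π_max. In particular, if π_max ≤ W/2 then the choice s = W/2 yields a rejection-free kernel. -/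
lemma gaFlow_diag {n : ℕ} (π : Fin n → ℝ) (s : ℝ) (hs : 0 < s)
    (hsW : s < ∑ k, π k) (i : Fin n) :
    gaFlow π s i i = max 0 (π i - s) + max 0 (π i + s - (∑ k, π k)) := by
  have hsum : (∑ k ∈ Finset.Iic i, π k) = π i + ∑ k ∈ Finset.Iio i, π k := by
    rw [← Finset.Iio_insert, Finset.sum_insert (by simp)]
  have hΔ : (∑ k ∈ Finset.Iic i, π k) - (∑ k ∈ Finset.Iio i, π k) + s = π i + s := by
    rw [hsum]; ring
  unfold gaFlow
  simp only [hΔ]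
  congr 1
  · congr 1
    have h1 : min (π i + s) (π i + π i - (π i + s)) = π i - s := by
      rw [min_eq_right]; · ring_nf
      · linarith
    rw [h1, min_self, min_eq_left (by linarith)]
  · congr 1
    have h1 : min (π i + s - ∑ k, π k) (π i + π i + (∑ k, π k) - (π i + s)) =
        π i + s - ∑ k, π k := by
      rw [min_eq_left]; linarith
    rw [h1, min_self, min_eq_left (by linarith)]

/-- the geometric-allocation kernel with shift `s ∈ (0, W)` is
rejection-free iff `πmax ≤ s ≤ W - πmax`, where `πmax = max_i π i`; in
particular, if `πmax ≤ W / 2` then the choice `s = W / 2` is rejection-free. -/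
theorem gaFlow_rejection_free_iff {n : ℕ} (hn : 1 ≤ n) (π : Fin n → ℝ)
    (hπ : ∀ i, 0 < π i) (s : ℝ) (hs : 0 < s) (hsW : s < ∑ k, π k)
    (πmax : ℝ) (hmax : IsGreatest (Set.range π) πmax) :
    ((∀ i, gaFlow π s i i = 0) ↔ (πmax ≤ s ∧ s ≤ (∑ k, π k) - πmax)) ∧
      (πmax ≤ (∑ k, π k) / 2 → ∀ i, gaFlow π ((∑ k, π k) / 2) i i = 0) := by
  set W := ∑ k, π k with hW
  obtain ⟨i₀, hi₀⟩ := hmax.1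
  have hub : ∀ i, π i ≤ πmax := fun i => hmax.2 ⟨i, rfl⟩
  have key : ∀ t, 0 < t → t < W →
      ((∀ i, gaFlow π t i i = 0) ↔ (πmax ≤ t ∧ t ≤ W - πmax)) := by
    intro t ht htW
    constructor
    · intro h
      have h0 := h i₀
      rw [gaFlow_diag π t ht htW i₀] at h0
      have ha : (0:ℝ) ≤ max 0 (π i₀ - t) := le_max_left _ _
      have hb : (0:ℝ) ≤ max 0 (π i₀ + t - W) := le_max_left _ _
      have h1 : max 0 (π i₀ - t) = 0 := by linarith
      have h2 : max 0 (π i₀ + t - W) = 0 := by linarith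
      have h1' : π i₀ - t ≤ 0 := max_eq_left_iff.mp h1
      have h2' : π i₀ + t - W ≤ 0 := max_eq_left_iff.mp h2
      rw [hi₀] at h1' h2'
      exact ⟨by linarith, by linarith⟩
    · rintro ⟨h1, h2⟩ i
      rw [gaFlow_diag π t ht htW i]
      have hi := hub i
      rw [max_eq_left (by linarith), max_eq_left (by linarith)]
      ring
  constructor
  · exact key s hs hsW
  · intro hhalf
    have hW0 : 0 < W := lt_trans hs hsW
    have := (key (W / 2) (by linarith) (by linarith)).2 ⟨by linarith, by linarith⟩
    exact this
end

section
/- If max_i π_i > W/2, then no rejection-free stochastic flow exists at all: there is no matrix v : Fin n → Fin n → ℝ with v_{ij} ≥ 0 for all i, j, row sums Σ_j v_{ij} = π_i for all i, column sums Σ_j v_{ji} = π_i for all i, and v_{ii} = 0 for all i. -/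
/-- if `max_i π i > W / 2`, then no rejection-free stochastic flow
compatible with `π` exists: there is no nonnegative matrix `v` with row sums and
column sums equal to `π` and vanishing diagonal. -/
theorem no_rejection_free_flow_of_large_max {n : ℕ} (hn : 1 ≤ n)
    (π : Fin n → ℝ) (hπ : ∀ i, 0 < π i)
    (πmax : ℝ) (hmax : IsGreatest (Set.range π) πmax)
    (hbig : (∑ k, π k) / 2 < πmax) :
    ¬ ∃ v : Fin n → Fin n → ℝ,
        (∀ i j, 0 ≤ v i j) ∧ (∀ i, ∑ j, v i j = π i) ∧
          (∀ i, ∑ j, v j i = π i) ∧ (∀ i, v i i = 0) := by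
  rintro ⟨v, hpos, hrow, hcol, hdiag⟩
  obtain ⟨⟨i₀, hi₀⟩, hub⟩ := hmax
  subst hi₀
  have key : π i₀ ≤ (∑ k, π k) - π i₀ := by
    have h1 : π i₀ = ∑ j ∈ Finset.univ.erase i₀, v i₀ j := by
      rw [← hrow i₀, ← Finset.add_sum_erase _ _ (Finset.mem_univ i₀), hdiag, zero_add]
    have h2 : ∀ j, v i₀ j ≤ π j := fun j => by
      rw [← hcol j]
      exact Finset.single_le_sum (fun k _ => hpos k j) (Finset.mem_univ i₀)
    calc π i₀ = ∑ j ∈ Finset.univ.erase i₀, v i₀ j := h1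
      _ ≤ ∑ j ∈ Finset.univ.erase i₀, π j := Finset.sum_le_sum fun j _ => h2 j
      _ = (∑ k, π k) - π i₀ := by
          rw [Finset.sum_erase_eq_sub (Finset.mem_univ i₀)]
  linarith
end

section
/- If max_i π_i ≤ W/2, then a rejection-free stochastic flow exists: there is a matrix v : Fin n → Fin n → ℝ with v_{ij} ≥ 0 for all i, j, row sums Σ_j v_{ij} = π_i for all i, column sums Σ_j v_{ji} = π_i for all i, and v_{ii} = 0 for all i. -/
open Finset

private lemma star_flow {n : ℕ} (π : Fin n → ℝ) (h0 : ∀ i, 0 ≤ π i) (i₀ : Fin n)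
    (h : 2 * π i₀ = ∑ k, π k) :
    ∃ v : Fin n → Fin n → ℝ,
      (∀ i j, 0 ≤ v i j) ∧ (∀ i, ∑ j, v i j = π i) ∧
        (∀ i, ∑ j, v j i = π i) ∧ (∀ i, v i i = 0) := by
  set v : Fin n → Fin n → ℝ :=
    fun i j => if i = i₀ ∧ j ≠ i₀ then π j else if j = i₀ ∧ i ≠ i₀ then π i else 0 with hv
  have hsymm : ∀ a b, v a b = v b a := by
    intro a b
    simp only [hv]
    split_ifs with h1 h2 h3 h4 h5 <;> first | rfl | tauto
  have hrow : ∀ i, ∑ j, v i j = π i := by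
    intro i
    by_cases hi : i = i₀
    · subst hi
      have he : ∀ j, v i j = π j - (if j = i then π j else 0) := by
        intro j
        simp only [hv]
        by_cases hj : j = i <;> simp [hj]
      calc ∑ j, v i j = (∑ j, π j) - (∑ j, if j = i then π j else 0) := by
            rw [← Finset.sum_sub_distrib]; exact Finset.sum_congr rfl fun j _ => he j
        _ = (∑ j, π j) - π i := by rw [Finset.sum_ite_eq' Finset.univ i π]; simp
        _ = π i := by linarith [h]
    · have he : ∀ j, v i j = if j = i₀ then π i else 0 := by
        intro j
        simp only [hv]
        by_cases hj : j = i₀ <;> simp [hj, hi]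
      calc ∑ j, v i j = ∑ j, (if j = i₀ then π i else 0) :=
            Finset.sum_congr rfl fun j _ => he j
        _ = π i := by rw [Finset.sum_ite_eq' Finset.univ i₀ fun _ => π i]; simp
  refine ⟨v, ?_, hrow, ?_, ?_⟩
  · intro i j
    simp only [hv]
    split_ifs <;> first | exact h0 _ | exact le_refl 0
  · intro i
    calc ∑ j, v j i = ∑ j, v i j := Finset.sum_congr rfl fun j _ => hsymm j i
      _ = π i := hrow i
  · intro i
    simp only [hv]
    split_ifs <;> tauto

private lemma flow_aux : ∀ (m : ℕ), ∀ {n : ℕ} (π : Fin n → ℝ),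
    (Finset.univ.filter fun i => 0 < π i).card ≤ m →
    (∀ i, 0 ≤ π i) → (∀ i, 2 * π i ≤ ∑ k, π k) →
    ∃ v : Fin n → Fin n → ℝ,
      (∀ i j, 0 ≤ v i j) ∧ (∀ i, ∑ j, v i j = π i) ∧
        (∀ i, ∑ j, v j i = π i) ∧ (∀ i, v i i = 0) := by
  intro m
  induction m with
  | zero =>
    intro n π hcard h0 hle
    have hz : ∀ i, π i = 0 := by
      intro i
      by_contra hne
      have hpos : 0 < π i := lt_of_le_of_ne (h0 i) (Ne.symm hne)
      have : i ∈ Finset.univ.filter fun i => 0 < π i := by simp [hpos]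
      have := Finset.card_pos.mpr ⟨i, this⟩
      omega
    exact ⟨fun _ _ => 0, fun _ _ => le_refl 0, fun i => by simp [hz i],
      fun i => by simp [hz i], fun _ => rfl⟩
  | succ m IH =>
    intro n π hcard h0 hle
    by_cases hstar : ∃ i₀, 2 * π i₀ = ∑ k, π k
    · obtain ⟨i₀, hi₀⟩ := hstar
      exact star_flow π h0 i₀ hi₀
    · push_neg at hstar
      have hlt : ∀ i, 2 * π i < ∑ k, π k := fun i => lt_of_le_of_ne (hle i) (hstar i)
      rcases Nat.eq_zero_or_pos n with hn0 | hn0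
      · subst hn0
        exact ⟨fun _ _ => 0, fun i => i.elim0, fun i => i.elim0, fun i => i.elim0,
          fun i => i.elim0⟩
      -- find j with π j > 0
      have hexj : ∃ j, 0 < π j := by
        by_contra hno
        push_neg at hno
        have hz : ∀ i, π i = 0 := fun i => le_antisymm (hno i) (h0 i)
        have := hlt ⟨0, hn0⟩
        simp [hz] at this
      obtain ⟨j, hj⟩ := hexj
      set W : ℝ := ∑ k, π k with hW
      -- find k ≠ j with π k > 0
      have hexk : ∃ k ∈ Finset.univ.erase j, 0 < π k := by
        have hsum : (0:ℝ) < ∑ i ∈ Finset.univ.erase j, π i := by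
          have h1 : ∑ i ∈ Finset.univ.erase j, π i = W - π j := by
            rw [hW, ← Finset.sum_erase_add Finset.univ π (Finset.mem_univ j)]; ring
          have := hlt j
          rw [h1]; linarith
        by_contra hno
        push_neg at hno
        have : ∑ i ∈ Finset.univ.erase j, π i ≤ 0 :=
          Finset.sum_nonpos fun i hi => hno i hi
        linarith
      obtain ⟨k, hk_mem, hk⟩ := hexk
      have hjk : j ≠ k := fun h => (Finset.mem_erase.mp hk_mem).1 h.symm
      set f : Fin n → ℝ := fun i => if i = j ∨ i = k then π i else W / 2 - π i with hf
      have hne : (Finset.univ : Finset (Fin n)).Nonempty := ⟨j, Finset.mem_univ j⟩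
      set t : ℝ := Finset.univ.inf' hne f with ht
      have hfpos : ∀ i, 0 < f i := by
        intro i
        simp only [hf]
        split_ifs with hc
        · rcases hc with rfl | rfl
          · exact hj
          · exact hk
        · have := hlt i; linarith
      have htpos : 0 < t := by
        rw [ht, Finset.lt_inf'_iff]
        exact fun i _ => hfpos i
      have ht_le : ∀ i, t ≤ f i := fun i => Finset.inf'_le f (Finset.mem_univ i)
      have htj : t ≤ π j := by have := ht_le j; simpa [hf] using this
      have htk : t ≤ π k := by have := ht_le k; simpa [hf] using this
      obtain ⟨i₀, _, hti₀⟩ := Finset.exists_mem_eq_inf' hne f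
      set π' : Fin n → ℝ := fun i => if i = j ∨ i = k then π i - t else π i with hπ'
      have h0' : ∀ i, 0 ≤ π' i := by
        intro i
        simp only [hπ']
        split_ifs with hc
        · have := ht_le i
          simp only [hf, if_pos hc] at this
          linarith
        · exact h0 i
      have hπ'le : ∀ i, π' i ≤ π i := by
        intro i; simp only [hπ']; split_ifs <;> linarith
      have hsum' : ∑ i, π' i = W - 2 * t := by
        have : ∀ i, π' i = π i - (if i ∈ ({j, k} : Finset (Fin n)) then t else 0) := by
          intro i
          simp only [hπ', Finset.mem_insert, Finset.mem_singleton]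
          split_ifs <;> ring
        rw [Finset.sum_congr rfl fun i _ => this i, Finset.sum_sub_distrib]
        have h2 : ∑ i, (if i ∈ ({j, k} : Finset (Fin n)) then t else 0) = 2 * t := by
          rw [Finset.sum_ite_mem, Finset.univ_inter, Finset.sum_const,
            Finset.card_insert_of_notMem (by simpa using hjk), Finset.card_singleton]
          push_cast; ring
        rw [h2, ← hW]
      have hle' : ∀ i, 2 * π' i ≤ ∑ i, π' i := by
        intro i
        rw [hsum']
        simp only [hπ']
        split_ifs with hc
        · have := hlt i; linarith
        · have := ht_le i
          simp only [hf, if_neg hc] at this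
          linarith
      have key : ∃ v' : Fin n → Fin n → ℝ,
          (∀ a b, 0 ≤ v' a b) ∧ (∀ a, ∑ b, v' a b = π' a) ∧
            (∀ a, ∑ b, v' b a = π' a) ∧ (∀ a, v' a a = 0) := by
        by_cases hi₀ : i₀ = j ∨ i₀ = k
        · -- t = π i₀, so π' i₀ = 0 : recurse
          have hti : t = π i₀ := by
            rw [ht, hti₀]; simp only [hf]; rw [if_pos hi₀]
          have hπ'i₀ : π' i₀ = 0 := by simp only [hπ', if_pos hi₀]; linarith
          have hmem : i₀ ∈ Finset.univ.filter fun i => 0 < π i := by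
            simp only [Finset.mem_filter, Finset.mem_univ, true_and]
            rw [← hti]; exact htpos
          have hsub : (Finset.univ.filter fun i => 0 < π' i) ⊆
              (Finset.univ.filter fun i => 0 < π i).erase i₀ := by
            intro x hx
            simp only [Finset.mem_filter, Finset.mem_univ, true_and] at hx
            refine Finset.mem_erase.mpr ⟨?_, ?_⟩
            · rintro rfl; rw [hπ'i₀] at hx; exact lt_irrefl 0 hx
            · simp only [Finset.mem_filter, Finset.mem_univ, true_and]
              exact lt_of_lt_of_le hx (hπ'le x)
          have hcard' : (Finset.univ.filter fun i => 0 < π' i).card ≤ m := by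
            have h1 := Finset.card_le_card hsub
            rw [Finset.card_erase_of_mem hmem] at h1
            omega
          exact IH π' hcard' h0' hle'
        · -- π' i₀ = (∑ π')/2 : star
          push_neg at hi₀
          have hcond : ¬ (i₀ = j ∨ i₀ = k) := by tauto
          have hti : t = W / 2 - π i₀ := by
            rw [ht, hti₀]; simp only [hf]; rw [if_neg hcond]
          have : 2 * π' i₀ = ∑ i, π' i := by
            rw [hsum']
            simp only [hπ', if_neg hcond]
            linarith
          exact star_flow π' h0' i₀ this
      obtain ⟨v', hv0, hvr, hvc, hvd⟩ := key
      refine ⟨fun a b => v' a b + ((if a = j ∧ b = k then t else 0)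
        + (if a = k ∧ b = j then t else 0)), ?_, ?_, ?_, ?_⟩
      · intro a b
        have := hv0 a b
        dsimp only
        split_ifs <;> linarith
      · intro a
        rw [Finset.sum_add_distrib, Finset.sum_add_distrib, hvr a]
        have h1 : ∑ b, (if a = j ∧ b = k then t else 0) = if a = j then t else 0 := by
          by_cases ha : a = j
          · simp only [ha, true_and, if_true]
            rw [Finset.sum_ite_eq' Finset.univ k fun _ => t]
            simp
          · simp [ha]
        have h2 : ∑ b, (if a = k ∧ b = j then t else 0) = if a = k then t else 0 := by
          by_cases ha : a = k
          · simp only [ha, true_and, if_true]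
            rw [Finset.sum_ite_eq' Finset.univ j fun _ => t]
            simp
          · simp [ha]
        rw [h1, h2]
        simp only [hπ']
        split_ifs <;>
          first
            | ring1
            | (exfalso; first
                | tauto
                | exact hjk ((‹a = j›).symm.trans ‹a = k›))
      · intro a
        rw [Finset.sum_add_distrib, Finset.sum_add_distrib, hvc a]
        have h1 : ∑ b, (if b = j ∧ a = k then t else 0) = if a = k then t else 0 := by
          by_cases ha : a = k
          · simp only [ha, and_true, if_true]
            rw [Finset.sum_ite_eq' Finset.univ j fun _ => t]
            simp
          · simp [ha]
        have h2 : ∑ b, (if b = k ∧ a = j then t else 0) = if a = j then t else 0 := by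
          by_cases ha : a = j
          · simp only [ha, and_true, if_true]
            rw [Finset.sum_ite_eq' Finset.univ k fun _ => t]
            simp
          · simp [ha]
        rw [h1, h2]
        simp only [hπ']
        split_ifs <;>
          first
            | ring1
            | (exfalso; first
                | tauto
                | exact hjk ((‹a = j›).symm.trans ‹a = k›))
      · intro a
        dsimp only
        rw [hvd a]
        have h1 : ¬ (a = j ∧ a = k) := by rintro ⟨rfl, rfl⟩; exact hjk rfl
        have h2 : ¬ (a = k ∧ a = j) := by rintro ⟨rfl, rfl⟩; exact hjk rfl
        simp [h1, h2]

/-- if `max_i π i ≤ W / 2`, then a rejection-free stochastic flow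
compatible with `π` exists: a nonnegative matrix `v` with row sums and column
sums equal to `π` and vanishing diagonal. -/
theorem exists_rejection_free_flow_of_small_max {n : ℕ} (hn : 1 ≤ n)
    (π : Fin n → ℝ) (hπ : ∀ i, 0 < π i)
    (πmax : ℝ) (hmax : IsGreatest (Set.range π) πmax)
    (hsmall : πmax ≤ (∑ k, π k) / 2) :
    ∃ v : Fin n → Fin n → ℝ,
      (∀ i j, 0 ≤ v i j) ∧ (∀ i, ∑ j, v i j = π i) ∧
        (∀ i, ∑ j, v j i = π i) ∧ (∀ i, v i i = 0) := by
  refine flow_aux n π ?_ (fun i => le_of_lt (hπ i)) ?_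
  · calc (Finset.univ.filter fun i => 0 < π i).card ≤ (Finset.univ : Finset (Fin n)).card :=
        Finset.card_le_card (Finset.filter_subset _ _)
      _ = n := by simp
  · intro i
    have h1 : π i ≤ πmax := hmax.2 ⟨i, rfl⟩
    linarith
end

section
/- The Metropolized Gibbs kernel satisfies detailed balance with respect to π: P^{MG}_{ij} π_j = P^{MG}_{ji} π_i for all states i, j. -/
/-- The Metropolized Gibbs kernel: `PMG π i j` is the transition probability from
state `j` to state `i`.  Off-diagonal entries are
`min (π i / (1 - π j)) (π i / (1 - π i))`; the diagonal entry is fixed by column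
normalization `∑ i, PMG π i j = 1`. -/
noncomputable def PMG {n : ℕ} (π : Fin n → ℝ) (i j : Fin n) : ℝ :=
  if i = j then
    1 - ∑ k ∈ Finset.univ.erase j, min (π k / (1 - π j)) (π k / (1 - π k))
  else min (π i / (1 - π j)) (π i / (1 - π i))

/-- the Metropolized Gibbs kernel satisfies detailed balance with
respect to `π`. -/
theorem PMG_detailed_balance {n : ℕ} (hn : 2 ≤ n) (π : Fin n → ℝ)
    (hpos : ∀ i, 0 < π i) (hsum : ∑ i, π i = 1) (hlt : ∀ i, π i < 1) :
    ∀ i j, PMG π i j * π j = PMG π j i * π i := by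
  intro i j
  rcases eq_or_ne i j with rfl | h
  · rfl
  · simp only [PMG, if_neg h, if_neg (Ne.symm h)]
    rw [min_mul_of_nonneg _ _ (hpos j).le, min_mul_of_nonneg _ _ (hpos i).le]
    rw [div_mul_eq_mul_div, div_mul_eq_mul_div, div_mul_eq_mul_div,
      div_mul_eq_mul_div, mul_comm (π j) (π i), min_comm]
end

section
/- The Metropolized Gibbs kernel dominates the Gibbs (heat bath) kernel in the Peskun order: for all i ≠ j, P^{MG}_{ij} ≥ P^{G}_{ij}, where the Gibbs kernel is P^{G}_{ij} = π_i (independent of the current state j). -/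
/-- the Metropolized Gibbs kernel dominates the Gibbs (heat bath)
kernel `P^G i j = π i` in the Peskun order: off-diagonal entries are at least
as large. -/
theorem PMG_dominates_gibbs {n : ℕ} (hn : 2 ≤ n) (π : Fin n → ℝ)
    (hpos : ∀ i, 0 < π i) (hsum : ∑ i, π i = 1) (hlt : ∀ i, π i < 1) :
    ∀ i j, i ≠ j → π i ≤ PMG π i j := by
  intro i j hij
  have key : ∀ k : Fin n, π i ≤ π i / (1 - π k) := by
    intro k
    have h1 : 0 < 1 - π k := by linarith [hlt k]
    rw [le_div_iff₀ h1]
    nlinarith [(hpos i).le, (hpos k).le]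
  simp only [PMG, if_neg hij, le_min_iff]
  exact ⟨key j, key i⟩
end

section
/- If the states are ordered so that π_1 ≤ π_2 ≤ ⋯ ≤ π_n, then the Metropolized Gibbs kernel has zero rejection probability at the smallest-weight state: P^{MG}_{11} = 1 − Σ_{i≥2} P^{MG}_{i1} = 0. -/
/-- if the states are ordered by increasing weight, the
Metropolized Gibbs kernel has zero rejection probability at the smallest-weight
state (state `0` in the `0`-based ordering). -/
theorem PMG_rejection_free_at_smallest {n : ℕ} (hn : 2 ≤ n) (π : Fin n → ℝ)
    (hpos : ∀ i, 0 < π i) (hsum : ∑ i, π i = 1) (hlt : ∀ i, π i < 1)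
    (hmono : Monotone π) :
    1 - ∑ i ∈ Finset.univ.erase (⟨0, by omega⟩ : Fin n),
        PMG π i ⟨0, by omega⟩ = 0 := by
  set z : Fin n := ⟨0, by omega⟩ with hz
  have hzle : ∀ i, π z ≤ π i := fun i => hmono (by simp [hz, Fin.le_def])
  have h1 : ∑ i ∈ Finset.univ.erase z, PMG π i z
      = ∑ i ∈ Finset.univ.erase z, π i / (1 - π z) := by
    apply Finset.sum_congr rfl
    intro i hi
    have hiz : i ≠ z := Finset.ne_of_mem_erase hi
    rw [PMG, if_neg hiz, min_eq_left]
    apply div_le_div_of_nonneg_left (le_of_lt (hpos i)) (by linarith [hlt i])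
    linarith [hzle i]
  rw [h1, ← Finset.sum_div,
    Finset.sum_erase_eq_sub (Finset.mem_univ z), hsum,
    div_self (by linarith [hlt z])]
  ring
end

section
/- The iterative Metropolized Gibbs kernel satisfies detailed balance with respect to π: P^{IMG}_{ij} π_j = P^{IMG}_{ji} π_i for all states i, j. -/
/-- `imgS w j = ∑_{k < j} y_k`, the partial sums of the `y`-sequence of the
iterative Metropolized Gibbs sampler built from the (`0`-indexed) weight
sequence `w`. -/
noncomputable def imgS (w : ℕ → ℝ) : ℕ → ℝ
  | 0 => 0
  | j + 1 =>
      imgS w j +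
        (if j = 0 then w 0 / (1 - w 0)
         else w j * (1 - imgS w j) / (1 - ∑ k ∈ Finset.range (j + 1), w k))

/-- The `y`-sequence of the iterative Metropolized Gibbs sampler:
`y 0 = w 0 / (1 - w 0)` and, for `j > 0`,
`y j = w j * (1 - ∑_{k < j} y k) / (1 - ∑_{k ≤ j} w k)`. -/
noncomputable def imgY (w : ℕ → ℝ) (j : ℕ) : ℝ :=
  if j = 0 then w 0 / (1 - w 0)
  else w j * (1 - imgS w j) / (1 - ∑ k ∈ Finset.range (j + 1), w k)

/-- The iterative Metropolized Gibbs kernel: `PIMG π i j` is the transition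
probability from state `j` to state `i` (states `0`-indexed, ordered by
increasing weight).  `PIMG π i j = y i` for `i < j`, `(π i / π j) * y j` for
`i > j`, `1 - ∑_{k < n - 1} y k` at the last diagonal entry, and `0` on the
remaining diagonal entries. -/
noncomputable def PIMG {n : ℕ} (π : Fin n → ℝ) (i j : Fin n) : ℝ :=
  let w : ℕ → ℝ := fun k => if h : k < n then π ⟨k, h⟩ else 0
  if (i : ℕ) < (j : ℕ) then imgY w i
  else if (j : ℕ) < (i : ℕ) then (π i / π j) * imgY w j
  else if (i : ℕ) = n - 1 then 1 - ∑ k ∈ Finset.range (n - 1), imgY w k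
  else 0

theorem PIMG_mul_eq_of_lt {n : ℕ} {π : Fin n → ℝ} {i j : Fin n} (hπ : π i ≠ 0) (hij : i < j) :
    PIMG π j i * π i = PIMG π i j * π j := by
  have hij' : (i : ℕ) < j := hij
  simp only [PIMG, if_pos hij', if_neg (lt_asymm hij')]
  field_simp

theorem PIMG_detailed_balance_general {n : ℕ} (π : Fin n → ℝ)
    (hpos : ∀ i, 0 < π i) :
    ∀ i j, PIMG π i j * π j = PIMG π j i * π i := by
  intro i j
  rcases lt_trichotomy i j with h | rfl | h
  · exact (PIMG_mul_eq_of_lt (hpos i).ne' h).symm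
  · rfl
  · exact PIMG_mul_eq_of_lt (hpos j).ne' h

/-- the iterative Metropolized Gibbs kernel satisfies detailed
balance with respect to `π`. -/
theorem PIMG_detailed_balance {n : ℕ} (hn : 2 ≤ n) (π : Fin n → ℝ)
    (hpos : ∀ i, 0 < π i) (hsum : ∑ i, π i = 1) (hmono : Monotone π)
    (hlt : ∀ i, π i < 1) :
    ∀ i j, PIMG π i j * π j = PIMG π j i * π i :=
  PIMG_detailed_balance_general π hpos
end

section
/- The iterative Metropolized Gibbs kernel is a valid stochastic matrix with zero rejection on all but the largest-weight state: all entries P^{IMG}_{ij} are nonnegative, every column sums to 1 (Σ_i P^{IMG}_{ij} = 1 for all j), and P^{IMG}_{ii} = 0 for every i < n. -/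
lemma imgS_eq (w : ℕ → ℝ) (j : ℕ) :
    imgS w j = ∑ k ∈ Finset.range j, imgY w k := by
  induction j with
  | zero => simp [imgS]
  | succ j ih => rw [Finset.sum_range_succ, ← ih]; rfl

lemma imgS_succ (w : ℕ → ℝ) (j : ℕ) :
    imgS w (j + 1) = imgS w j + imgY w j := rfl

lemma imgY_eq (w : ℕ → ℝ) (j : ℕ) :
    imgY w j = w j * (1 - imgS w j) / (1 - ∑ k ∈ Finset.range (j + 1), w k) := by
  rcases Nat.eq_zero_or_pos j with h | h
  · subst h; simp [imgY, imgS, Finset.sum_range_one]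
  · rw [imgY, if_neg (by omega : ¬ j = 0)]

lemma img_sum_tail {n : ℕ} {w : ℕ → ℝ} (hwsum : ∑ k ∈ Finset.range n, w k = 1)
    {m : ℕ} (hm : m ≤ n) :
    1 - ∑ k ∈ Finset.range m, w k = ∑ k ∈ Finset.Ico m n, w k := by
  have h := Finset.sum_Ico_consecutive w (Nat.zero_le m) hm
  simp only [← Finset.range_eq_Ico] at h
  linarith

lemma img_Apos {n : ℕ} {w : ℕ → ℝ} (hw : ∀ k, k < n → 0 < w k)
    (hwsum : ∑ k ∈ Finset.range n, w k = 1) {m : ℕ} (hm : m < n) :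
    0 < 1 - ∑ k ∈ Finset.range m, w k := by
  rw [img_sum_tail hwsum hm.le]
  exact Finset.sum_pos' (fun k hk => (hw k (Finset.mem_Ico.mp hk).2).le)
    ⟨m, Finset.mem_Ico.mpr ⟨le_refl m, hm⟩, hw m hm⟩

lemma img_Tnonneg {n : ℕ} {w : ℕ → ℝ} (hw : ∀ k, k < n → 0 < w k)
    (hwsum : ∑ k ∈ Finset.range n, w k = 1)
    (hwmono : ∀ k, k + 1 < n → w k ≤ w (k + 1)) :
    ∀ j, j < n → 0 ≤ 1 - imgS w j := by
  intro j
  induction j with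
  | zero => intro _; simp [imgS]
  | succ j ih =>
    intro hj
    have hjn : j < n := Nat.lt_of_succ_lt hj
    have hA : 0 < 1 - ∑ k ∈ Finset.range (j + 1), w k := img_Apos hw hwsum hj
    have hT : 0 ≤ 1 - imgS w j := ih hjn
    have hAw : w j ≤ 1 - ∑ k ∈ Finset.range (j + 1), w k := by
      rw [img_sum_tail hwsum (le_of_lt hj)]
      calc w j ≤ w (j + 1) := hwmono j hj
        _ ≤ ∑ k ∈ Finset.Ico (j + 1) n, w k :=
          Finset.single_le_sum (fun k hk => (hw k (Finset.mem_Ico.mp hk).2).le)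
            (Finset.mem_Ico.mpr ⟨le_refl _, hj⟩)
    rw [imgS_succ, imgY_eq]
    have key : 1 - (imgS w j + w j * (1 - imgS w j) / (1 - ∑ k ∈ Finset.range (j + 1), w k))
        = (1 - imgS w j) * ((1 - ∑ k ∈ Finset.range (j + 1), w k) - w j)
          / (1 - ∑ k ∈ Finset.range (j + 1), w k) := by
      field_simp
      ring
    rw [key]
    exact div_nonneg (mul_nonneg hT (by linarith)) hA.le

lemma img_Ynonneg {n : ℕ} {w : ℕ → ℝ} (hw : ∀ k, k < n → 0 < w k)
    (hwsum : ∑ k ∈ Finset.range n, w k = 1)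
    (hwmono : ∀ k, k + 1 < n → w k ≤ w (k + 1)) {j : ℕ} (hj : j + 1 < n) :
    0 ≤ imgY w j := by
  rw [imgY_eq]
  exact div_nonneg (mul_nonneg (hw j (by omega)).le
    (img_Tnonneg hw hwsum hwmono j (by omega))) (img_Apos hw hwsum hj).le

/-- the iterative Metropolized Gibbs kernel is a valid stochastic
matrix with zero rejection on all but the largest-weight state: all entries are
nonnegative, every column sums to one, and the diagonal entries vanish except
possibly at the last state. -/
theorem PIMG_stochastic_rejection_free {n : ℕ} (hn : 2 ≤ n) (π : Fin n → ℝ)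
    (hpos : ∀ i, 0 < π i) (hsum : ∑ i, π i = 1) (hmono : Monotone π)
    (hlt : ∀ i, π i < 1) :
    (∀ i j, 0 ≤ PIMG π i j) ∧ (∀ j, ∑ i, PIMG π i j = 1) ∧
      (∀ i : Fin n, (i : ℕ) < n - 1 → PIMG π i i = 0) := by
  set w : ℕ → ℝ := fun k => if h : k < n then π ⟨k, h⟩ else 0 with hw_def
  have hπw : ∀ i : Fin n, π i = w ↑i := by
    intro i; simp [hw_def, i.isLt]
  have hw : ∀ k, k < n → 0 < w k := by
    intro k hk
    simp only [hw_def, dif_pos hk]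
    exact hpos _
  have hwsum : ∑ k ∈ Finset.range n, w k = 1 := by
    rw [← Fin.sum_univ_eq_sum_range, ← hsum]
    exact Finset.sum_congr rfl fun i _ => (hπw i).symm
  have hwmono : ∀ k, k + 1 < n → w k ≤ w (k + 1) := by
    intro k hk
    have h1 : k < n := by omega
    simp only [hw_def, dif_pos h1, dif_pos hk]
    exact hmono (Fin.mk_le_mk.mpr (Nat.le_succ k))
  have hP : ∀ i j : Fin n, PIMG π i j =
      if (i : ℕ) < (j : ℕ) then imgY w ↑i
      else if (j : ℕ) < (i : ℕ) then (w ↑i / w ↑j) * imgY w ↑j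
      else if (i : ℕ) = n - 1 then 1 - ∑ k ∈ Finset.range (n - 1), imgY w k
      else 0 := by
    intro i j
    simp only [PIMG, ← hw_def, ← hπw]
  refine ⟨?_, ?_, ?_⟩
  · -- nonnegativity
    intro i j
    have hi : (i : ℕ) < n := i.isLt
    have hjn : (j : ℕ) < n := j.isLt
    rw [hP]
    split_ifs with h1 h2 h3
    · exact img_Ynonneg hw hwsum hwmono (by omega)
    · exact mul_nonneg (div_nonneg (hw _ hi).le (hw _ hjn).le)
        (img_Ynonneg hw hwsum hwmono (by omega))
    · rw [← imgS_eq]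
      exact img_Tnonneg hw hwsum hwmono (n - 1) (by omega)
    · exact le_refl 0
  · -- column sums
    intro j
    have hjn : (j : ℕ) < n := j.isLt
    set f : ℕ → ℝ := fun i => if i < (j : ℕ) then imgY w i
          else if (j : ℕ) < i then (w i / w ↑j) * imgY w ↑j
          else if i = n - 1 then 1 - ∑ k ∈ Finset.range (n - 1), imgY w k
          else 0 with hf
    have hsum' : ∑ i, PIMG π i j = ∑ i ∈ Finset.range n, f i := by
      rw [← Fin.sum_univ_eq_sum_range]
      refine Finset.sum_congr rfl fun i _ => ?_
      rw [hP i j, hf]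
    rw [hsum']
    by_cases hj : (j : ℕ) = n - 1
    · have hr : Finset.range n = Finset.range (n - 1 + 1) := by congr 1; omega
      have h1 : ∀ i ∈ Finset.range (n - 1), f i = imgY w i := by
        intro i hi
        have hi' := Finset.mem_range.mp hi
        simp only [hf]
        rw [if_pos (by omega)]
      have h2 : f (n - 1) = 1 - ∑ k ∈ Finset.range (n - 1), imgY w k := by
        simp only [hf]
        rw [if_neg (by omega), if_neg (by omega)]
        simp
      rw [hr, Finset.sum_range_succ, Finset.sum_congr rfl h1, h2]
      ring
    · have hjlt : (j : ℕ) < n - 1 := by omega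
      have hj1 : (j : ℕ) + 1 ≤ n := by omega
      have h1 : ∀ i ∈ Finset.range (j : ℕ), f i = imgY w i := by
        intro i hi
        simp only [hf]
        rw [if_pos (Finset.mem_range.mp hi)]
      have h2 : f ↑j = 0 := by
        simp only [hf]
        rw [if_neg (by omega), if_neg (by omega), if_neg (by omega)]
      have h3 : ∀ i ∈ Finset.Ico ((j : ℕ) + 1) n, f i = w i * (imgY w ↑j / w ↑j) := by
        intro i hi
        have hji : (j : ℕ) < i := (Finset.mem_Ico.mp hi).1
        simp only [hf]
        rw [if_neg (by omega), if_pos hji]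
        ring
      rw [Finset.range_eq_Ico,
        ← Finset.sum_Ico_consecutive f (Nat.zero_le ((j : ℕ) + 1)) hj1,
        ← Finset.range_eq_Ico, Finset.sum_range_succ, Finset.sum_congr rfl h1, h2,
        Finset.sum_congr rfl h3, ← Finset.sum_mul, ← img_sum_tail hwsum hj1, ← imgS_eq]
      have hA : 0 < 1 - ∑ k ∈ Finset.range ((j : ℕ) + 1), w k :=
        img_Apos hw hwsum (by omega)
      have hwj : w ↑j ≠ 0 := (hw _ hjn).ne'
      rw [imgY_eq]
      field_simp
      ring
  · -- diagonal
    intro i hi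
    rw [hP]
    rw [if_neg (lt_irrefl _), if_neg (lt_irrefl _), if_neg (by omega)]
end

section
/- (Peskun) Suppose P₁ and P₂ are irreducible row-stochastic matrices on Fin n, both reversible with respect to the positive probability vector π, and P₂ dominates P₁ in the Peskun order: (P₂)_{ij} ≥ (P₁)_{ij} for all i ≠ j. Fix f : Fin n → ℝ, let μ = Σ_i π_i f_i, and for a stochastic matrix P define c_t(P) = Σ_{i,j} π_i f_i (P^t)_{ij} f_j − μ² and v_M(P) = (1/M) Σ_{s=1}^{M} Σ_{t=1}^{M} c_{|s−t|}(P). If v_M(P₁) converges to v₁ and v_M(P₂) converges to v₂ as M → ∞, then v₁ ≥ v₂. -/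
/-- The autocovariance at lag `t` of the observable `f` for the stationary
Markov chain with transition matrix `P` and invariant distribution `π`:
`c_t(P) = ∑ i j, π i * f i * (P^t) i j * f j − (∑ i, π i * f i)^2`. -/
noncomputable def autocov {n : ℕ} (π : Fin n → ℝ) (f : Fin n → ℝ)
    (P : Matrix (Fin n) (Fin n) ℝ) (t : ℕ) : ℝ :=
  (∑ i, ∑ j, π i * f i * (P ^ t) i j * f j) - (∑ i, π i * f i) ^ 2

/-- `M` times the variance of the empirical mean of `f` over `M` steps of the
stationary chain generated by `P`:
`v_M(P) = (1/M) ∑_{s,t=1}^{M} c_{|s−t|}(P)`. -/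
noncomputable def scaledVar {n : ℕ} (π : Fin n → ℝ) (f : Fin n → ℝ)
    (P : Matrix (Fin n) (Fin n) ℝ) (M : ℕ) : ℝ :=
  (1 / (M : ℝ)) * ∑ s ∈ Finset.range M, ∑ t ∈ Finset.range M,
    autocov π f P (Nat.dist s t)




section PeskunProof

open Filter Finset Matrix

variable {n : ℕ} {π : Fin n → ℝ} {P : Matrix (Fin n) (Fin n) ℝ}

lemma geom_aux (x : ℝ) (M : ℕ) : (1-x) * ∑ d ∈ range M, x^d = 1 - x^M := by
  induction M with
  | zero => simp
  | succ m ih => rw [Finset.sum_range_succ, mul_add, ih, pow_succ]; ring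

lemma shift_sum (x : ℝ) (M : ℕ) : ∑ s ∈ range M, x^(M - s) = x * ∑ d ∈ range M, x^d := by
  rw [← Finset.sum_range_reflect (fun s => x^(M-s)) M, Finset.mul_sum]
  apply Finset.sum_congr rfl
  intro j hj
  rw [Finset.mem_range] at hj
  have : M - (M - 1 - j) = j + 1 := by omega
  rw [this, pow_succ]; ring

lemma Fform (x : ℝ) (M : ℕ) :
    (1-x)^2 * (∑ s ∈ range M, ∑ t ∈ range M, x^(Nat.dist s t))
      = M*(1-x)^2 + 2*x*((M:ℝ)-1)*(1-x) - 2*x^2 + 2*x^(M+1) := by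
  induction M with
  | zero => simp; ring
  | succ m ih =>
    have hF : (∑ s ∈ range (m+1), ∑ t ∈ range (m+1), x^(Nat.dist s t))
        = (∑ s ∈ range m, ∑ t ∈ range m, x^(Nat.dist s t))
          + 2 * (∑ s ∈ range m, x^(m - s)) + 1 := by
      rw [Finset.sum_range_succ]
      have h1 : ∀ s ∈ range m, (∑ t ∈ range (m+1), x^(Nat.dist s t))
          = (∑ t ∈ range m, x^(Nat.dist s t)) + x^(m-s) := by
        intro s hs
        rw [Finset.sum_range_succ]
        congr 2
        rw [Finset.mem_range] at hs
        exact Nat.dist_eq_sub_of_le (le_of_lt hs)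
      rw [Finset.sum_congr rfl h1, Finset.sum_add_distrib, Finset.sum_range_succ]
      have h2 : ∀ t ∈ range m, x^(Nat.dist m t) = x^(m-t) := by
        intro t ht
        rw [Finset.mem_range] at ht
        rw [Nat.dist_comm, Nat.dist_eq_sub_of_le (le_of_lt ht)]
      rw [Finset.sum_congr rfl h2, Nat.dist_self]
      ring
    rw [hF]
    have key : (1-x) * ∑ s ∈ range m, x^(m - s) = x * (1 - x^m) := by
      rw [shift_sum, ← mul_assoc, mul_comm (1-x) x, mul_assoc, geom_aux]
    have expand : (1-x)^2 * ((∑ s ∈ range m, ∑ t ∈ range m, x^(Nat.dist s t))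
        + 2 * (∑ s ∈ range m, x^(m - s)) + 1)
        = (1-x)^2 * (∑ s ∈ range m, ∑ t ∈ range m, x^(Nat.dist s t))
          + 2 * (1-x) * ((1-x) * ∑ s ∈ range m, x^(m - s)) + (1-x)^2 := by ring
    rw [expand, ih, key]
    push_cast
    have hp : x^(m+1+1) = x^m * x * x := by rw [pow_succ, pow_succ]
    have hp2 : x^(m+1) = x^m * x := by rw [pow_succ]
    rw [hp, hp2]
    ring

noncomputable def kfun (x : ℝ) (M : ℕ) : ℝ :=
  (1/(M:ℝ)) * ∑ s ∈ range M, ∑ t ∈ range M, x^(Nat.dist s t)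

lemma k_tendsto (x : ℝ) (hx1 : -1 ≤ x) (hx2 : x < 1) :
    Tendsto (fun M : ℕ => kfun x M) atTop (nhds ((1+x)/(1-x))) := by
  have hc : (1-x) ≠ 0 := by linarith
  have hc2 : (1-x)^2 ≠ 0 := pow_ne_zero _ hc
  -- G M := 1 + (2*x/(1-x)) * (((M:ℝ)-1)/M) + (2*x^(M+1) - 2*x^2) * (1/M) * (1/(1-x)^2)
  set G : ℕ → ℝ := fun M =>
    1 + (2*x/(1-x)) * (((M:ℝ)-1)/M) + (2*x^(M+1) - 2*x^2) * (1/(M:ℝ)) * (1/(1-x)^2) with hG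
  have heq : ∀ᶠ M in atTop, G M = kfun x M := by
    filter_upwards [eventually_ge_atTop 1] with M hM
    have hM0 : (M:ℝ) ≠ 0 := by positivity
    have := Fform x M
    have hk : kfun x M = (1/(M:ℝ)) * (((M:ℝ)*(1-x)^2 + 2*x*((M:ℝ)-1)*(1-x) - 2*x^2 + 2*x^(M+1)) / (1-x)^2) := by
      rw [kfun]
      congr 1
      field_simp
      linarith [Fform x M]
    rw [hk, hG]
    field_simp
    ring
  apply Tendsto.congr' heq
  have h1 : Tendsto (fun M : ℕ => ((M:ℝ)-1)/M) atTop (nhds 1) := by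
    have : (fun M : ℕ => ((M:ℝ)-1)/M) =ᶠ[atTop] fun M : ℕ => 1 - (M:ℝ)⁻¹ := by
      filter_upwards [eventually_ge_atTop 1] with M hM
      have hM0 : (M:ℝ) ≠ 0 := by positivity
      field_simp
    rw [Filter.tendsto_congr' this]
    have := tendsto_inv_atTop_nhds_zero_nat (𝕜 := ℝ)
    have h := (tendsto_const_nhds (x := (1:ℝ)) (f := atTop)).sub this
    simpa using h
  have h2 : Tendsto (fun M : ℕ => (2*x^(M+1) - 2*x^2) * (1/(M:ℝ)) * (1/(1-x)^2)) atTop (nhds 0) := by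
    apply squeeze_zero_norm (a := fun M : ℕ => (4 * (1/(1-x)^2)) * (1/(M:ℝ)))
    · intro M
      have hxb : |x| ≤ 1 := abs_le.2 ⟨hx1, le_of_lt hx2⟩
      have hxp : |x^(M+1)| ≤ 1 := by
        rw [abs_pow]; exact pow_le_one₀ (abs_nonneg x) hxb
      have hx2b : |x^2| ≤ 1 := by
        rw [abs_pow]; exact pow_le_one₀ (abs_nonneg x) hxb
      have : |2*x^(M+1) - 2*x^2| ≤ 4 := by
        calc |2*x^(M+1) - 2*x^2| ≤ |2*x^(M+1)| + |2*x^2| := abs_sub _ _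
        _ ≤ 2 + 2 := by rw [abs_mul, abs_mul]; simp only [abs_two]; nlinarith
        _ = 4 := by norm_num
      rw [norm_mul, norm_mul]
      have hn1 : ‖(1/(M:ℝ))‖ = 1/(M:ℝ) := by
        rw [Real.norm_eq_abs, abs_of_nonneg]; positivity
      have hn2 : ‖(1/(1-x)^2)‖ = 1/(1-x)^2 := by
        rw [Real.norm_eq_abs, abs_of_nonneg]; positivity
      rw [hn1, hn2, Real.norm_eq_abs]
      have hpos : (0:ℝ) ≤ 1/(M:ℝ) := by positivity
      have hpos2 : (0:ℝ) ≤ 1/(1-x)^2 := by positivity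
      have habs : (0:ℝ) ≤ |2*x^(M+1) - 2*x^2| := abs_nonneg _
      calc |2*x^(M+1) - 2*x^2| * (1/(M:ℝ)) * (1/(1-x)^2)
          ≤ 4 * (1/(M:ℝ)) * (1/(1-x)^2) := by
            apply mul_le_mul_of_nonneg_right _ hpos2
            exact mul_le_mul_of_nonneg_right this hpos
        _ = 4 * (1/(1-x)^2) * (1/(M:ℝ)) := by ring
    · have := tendsto_one_div_atTop_nhds_zero_nat (𝕜 := ℝ)
      have h := this.const_mul (4 * (1/(1-x)^2))
      simpa using h
  have h3 : Tendsto G atTop (nhds (1 + (2*x/(1-x)) * 1 + 0)) := by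
    exact ((tendsto_const_nhds.add ((tendsto_const_nhds).mul h1)).add h2)
  convert h3 using 2
  field_simp
  ring

lemma dot_eq_inner (x y : EuclideanSpace ℝ (Fin n)) :
    inner ℝ x y = (x : Fin n → ℝ) ⬝ᵥ (y : Fin n → ℝ) := by
  simp [PiLp.inner_apply, RCLike.inner_apply, dotProduct, mul_comm]

lemma spectral_rep (S : Matrix (Fin n) (Fin n) ℝ) (hS : S.IsHermitian) (g : Fin n → ℝ)
    (hub : ∀ x : Fin n → ℝ, x ⬝ᵥ (S *ᵥ x) ≤ x ⬝ᵥ x)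
    (hlb : ∀ x : Fin n → ℝ, -(x ⬝ᵥ x) ≤ x ⬝ᵥ (S *ᵥ x)) :
    ∃ a lam : Fin n → ℝ, (∀ k, 0 ≤ a k) ∧ (∀ k, -1 ≤ lam k ∧ lam k ≤ 1) ∧
      (∀ t : ℕ, g ⬝ᵥ ((S^t) *ᵥ g) = ∑ k, a k * (lam k)^t) ∧
      (∀ r : ℝ, 0 ≤ r → r < 1 →
        g ⬝ᵥ ((1 - r • S)⁻¹ *ᵥ g) = ∑ k, a k * (1 - r * lam k)⁻¹) := by
  set b := hS.eigenvectorBasis with hb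
  set lam := hS.eigenvalues with hlam
  set gE : EuclideanSpace ℝ (Fin n) := WithLp.toLp 2 g with hgE
  have hbound : ∀ k, -1 ≤ lam k ∧ lam k ≤ 1 := by
    intro k
    have hnorm : (b k : Fin n → ℝ) ⬝ᵥ (b k : Fin n → ℝ) = 1 := by
      have hn1 : ‖b k‖ = 1 := b.orthonormal.1 k
      rw [← dot_eq_inner, real_inner_self_eq_norm_sq, hn1]; norm_num
    have heig : S *ᵥ (b k : Fin n → ℝ) = lam k • (b k : Fin n → ℝ) :=
      hS.mulVec_eigenvectorBasis k
    have hquad : (b k : Fin n → ℝ) ⬝ᵥ (S *ᵥ (b k : Fin n → ℝ)) = lam k := by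
      rw [heig, dotProduct_smul, hnorm]; simp
    constructor
    · have := hlb (b k : Fin n → ℝ); rw [hquad, hnorm] at this; linarith
    · have := hub (b k : Fin n → ℝ); rw [hquad, hnorm] at this; linarith
  have master : ∀ (T : Matrix (Fin n) (Fin n) ℝ), Tᵀ = T → ∀ (c : Fin n → ℝ),
      (∀ k, T *ᵥ (b k : Fin n → ℝ) = c k • (b k : Fin n → ℝ)) →
      g ⬝ᵥ (T *ᵥ g) = ∑ k, (inner ℝ (b k) gE : ℝ)^2 * c k := by
    intro T hT c hc
    have h1 : g ⬝ᵥ (T *ᵥ g) = (inner ℝ gE (WithLp.toLp 2 (T *ᵥ g)) : ℝ) :=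
      (dot_eq_inner gE (WithLp.toLp 2 (T *ᵥ g))).symm
    rw [h1, ← OrthonormalBasis.sum_inner_mul_inner b gE (WithLp.toLp 2 (T *ᵥ g))]
    apply Finset.sum_congr rfl
    intro k _
    have h2 : (inner ℝ (b k) (WithLp.toLp 2 (T *ᵥ g)) : ℝ)
        = c k * (inner ℝ (b k) gE : ℝ) := by
      rw [dot_eq_inner, dot_eq_inner]
      calc (b k : Fin n → ℝ) ⬝ᵥ (T *ᵥ g)
          = ((b k : Fin n → ℝ) ᵥ* T) ⬝ᵥ g := Matrix.dotProduct_mulVec _ _ _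
        _ = (T *ᵥ (b k : Fin n → ℝ)) ⬝ᵥ g := by
            rw [← Matrix.mulVec_transpose, hT]
        _ = c k * ((b k : Fin n → ℝ) ⬝ᵥ g) := by rw [hc k, smul_dotProduct]; simp
    have h3 : (inner ℝ gE (b k) : ℝ) = (inner ℝ (b k) gE : ℝ) := real_inner_comm _ _
    rw [h2, h3]
    ring
  refine ⟨fun k => (inner ℝ (b k) gE : ℝ)^2, lam, fun k => sq_nonneg _, hbound, ?_, ?_⟩
  · -- powers
    have hST : Sᵀ = S := by
      have := hS.eq
      ext i j
      have h := congrFun (congrFun this i) j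
      simpa [Matrix.conjTranspose_apply] using h
    intro t
    have heigt : ∀ k, (S^t) *ᵥ (b k : Fin n → ℝ) = (lam k)^t • (b k : Fin n → ℝ) := by
      intro k
      induction t with
      | zero => simp [Matrix.one_mulVec]
      | succ m ihm =>
        have heig1 : S *ᵥ (b k : Fin n → ℝ) = lam k • (b k : Fin n → ℝ) :=
          hS.mulVec_eigenvectorBasis k
        rw [pow_succ, ← Matrix.mulVec_mulVec, heig1,
          Matrix.mulVec_smul, ihm, smul_smul, pow_succ]
        congr 1
        ring
    have hTsymm : (S^t)ᵀ = S^t := by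
      rw [Matrix.transpose_pow, hST]
    rw [master (S^t) hTsymm (fun k => (lam k)^t) heigt]
  · -- resolvent
    intro r hr0 hr1
    have hST : Sᵀ = S := by
      have := hS.eq
      ext i j
      have h := congrFun (congrFun this i) j
      simpa [Matrix.conjTranspose_apply] using h
    set B : Matrix (Fin n) (Fin n) ℝ := 1 - r • S with hB
    have hBT : Bᵀ = B := by
      rw [hB, Matrix.transpose_sub, Matrix.transpose_one, Matrix.transpose_smul, hST]
    have hBherm : B.IsHermitian := by
      rw [Matrix.IsHermitian]
      ext i j
      have h := congrFun (congrFun hBT j) i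
      simpa [Matrix.conjTranspose_apply, Matrix.transpose_apply] using h.symm
    have hquadB : ∀ x : Fin n → ℝ, x ⬝ᵥ (B *ᵥ x) = x ⬝ᵥ x - r * (x ⬝ᵥ (S *ᵥ x)) := by
      intro x
      rw [hB, Matrix.sub_mulVec, Matrix.one_mulVec, dotProduct_sub,
        Matrix.smul_mulVec, dotProduct_smul]
      simp
    have hBpos : B.PosDef := by
      refine Matrix.PosDef.of_dotProduct_mulVec_pos hBherm (fun x hx => ?_)
      have hxx0 : 0 ≤ x ⬝ᵥ x := Finset.sum_nonneg (fun i _ => mul_self_nonneg _)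
      have hxx : 0 < x ⬝ᵥ x := by
        rcases eq_or_lt_of_le hxx0 with h | h
        · exact absurd (dotProduct_self_eq_zero.1 h.symm) hx
        · exact h
      have hsx := hub x
      have : (0:ℝ) < x ⬝ᵥ (B *ᵥ x) := by
        rw [hquadB]
        nlinarith
      simpa [star_trivial] using this
    have hdet : IsUnit B.det := hBpos.det_pos.ne'.isUnit
    have hBinvT : (B⁻¹)ᵀ = B⁻¹ := by
      rw [Matrix.transpose_nonsing_inv, hBT]
    have heigB : ∀ k, B⁻¹ *ᵥ (b k : Fin n → ℝ) = (1 - r * lam k)⁻¹ • (b k : Fin n → ℝ) := by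
      intro k
      have hne : (1 : ℝ) - r * lam k ≠ 0 := by
        have h1 := (hbound k).2
        nlinarith [(hbound k).1]
      have heig1 : S *ᵥ (b k : Fin n → ℝ) = lam k • (b k : Fin n → ℝ) :=
        hS.mulVec_eigenvectorBasis k
      have heig : B *ᵥ (b k : Fin n → ℝ) = (1 - r * lam k) • (b k : Fin n → ℝ) := by
        rw [hB, Matrix.sub_mulVec, Matrix.one_mulVec, Matrix.smul_mulVec,
          heig1, smul_smul, sub_smul, one_smul]
      have h2 : B⁻¹ *ᵥ (B *ᵥ (b k : Fin n → ℝ)) = (b k : Fin n → ℝ) := by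
        rw [Matrix.mulVec_mulVec, Matrix.nonsing_inv_mul B hdet, Matrix.one_mulVec]
      rw [heig, Matrix.mulVec_smul] at h2
      calc B⁻¹ *ᵥ (b k : Fin n → ℝ)
          = (1 - r*lam k)⁻¹ • ((1 - r*lam k) • (B⁻¹ *ᵥ (b k : Fin n → ℝ))) := by
            rw [smul_smul, inv_mul_cancel₀ hne, one_smul]
        _ = (1 - r * lam k)⁻¹ • (b k : Fin n → ℝ) := by rw [h2]
    rw [master B⁻¹ hBinvT (fun k => (1 - r * lam k)⁻¹) heigB]

lemma dot_symm (T : Matrix (Fin n) (Fin n) ℝ) (hT : Tᵀ = T) (u v : Fin n → ℝ) :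
    u ⬝ᵥ (T *ᵥ v) = v ⬝ᵥ (T *ᵥ u) := by
  rw [Matrix.dotProduct_mulVec, ← Matrix.mulVec_transpose, hT, dotProduct_comm]

lemma inv_mono (A B : Matrix (Fin n) (Fin n) ℝ) (hAT : Aᵀ = A) (hBT : Bᵀ = B)
    (hBpsd : ∀ x : Fin n → ℝ, 0 ≤ x ⬝ᵥ (B *ᵥ x))
    (hAdet : IsUnit A.det) (hBdet : IsUnit B.det)
    (hle : ∀ x : Fin n → ℝ, x ⬝ᵥ (B *ᵥ x) ≤ x ⬝ᵥ (A *ᵥ x)) (x : Fin n → ℝ) :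
    x ⬝ᵥ (A⁻¹ *ᵥ x) ≤ x ⬝ᵥ (B⁻¹ *ᵥ x) := by
  have hBB : B *ᵥ (B⁻¹ *ᵥ x) = x := by
    rw [Matrix.mulVec_mulVec, Matrix.mul_nonsing_inv B hBdet, Matrix.one_mulVec]
  have key : ∀ y : Fin n → ℝ, 2*(x ⬝ᵥ y) - y ⬝ᵥ (B *ᵥ y) ≤ x ⬝ᵥ (B⁻¹ *ᵥ x) := by
    intro y
    have h0 := hBpsd (y - B⁻¹ *ᵥ x)
    have hexp : (y - B⁻¹ *ᵥ x) ⬝ᵥ (B *ᵥ (y - B⁻¹ *ᵥ x))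
        = y ⬝ᵥ (B *ᵥ y) - 2*(x ⬝ᵥ y) + x ⬝ᵥ (B⁻¹ *ᵥ x) := by
      rw [Matrix.mulVec_sub, hBB, sub_dotProduct, dotProduct_sub, dotProduct_sub]
      have h1 : (B⁻¹ *ᵥ x) ⬝ᵥ (B *ᵥ y) = y ⬝ᵥ x := by
        rw [dot_symm B hBT, hBB]
      have h2 : (B⁻¹ *ᵥ x) ⬝ᵥ x = x ⬝ᵥ (B⁻¹ *ᵥ x) := dotProduct_comm _ _
      have h3 : y ⬝ᵥ x = x ⬝ᵥ y := dotProduct_comm _ _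
      rw [h1, h2, h3]
      ring
    rw [hexp] at h0
    linarith
  have hAA : A *ᵥ (A⁻¹ *ᵥ x) = x := by
    rw [Matrix.mulVec_mulVec, Matrix.mul_nonsing_inv A hAdet, Matrix.one_mulVec]
  set y := A⁻¹ *ᵥ x with hy
  have hxy : y ⬝ᵥ (A *ᵥ y) = x ⬝ᵥ y := by
    rw [hy, hAA, dotProduct_comm]
  calc x ⬝ᵥ (A⁻¹ *ᵥ x) = 2*(x ⬝ᵥ y) - y ⬝ᵥ (A *ᵥ y) := by rw [hxy]; ring
    _ ≤ 2*(x ⬝ᵥ y) - y ⬝ᵥ (B *ᵥ y) := by linarith [hle y]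
    _ ≤ x ⬝ᵥ (B⁻¹ *ᵥ x) := key y

noncomputable def symmMat {n : ℕ} (π : Fin n → ℝ) (P : Matrix (Fin n) (Fin n) ℝ) :
    Matrix (Fin n) (Fin n) ℝ :=
  Matrix.of fun i j => Real.sqrt (π i) * P i j * (Real.sqrt (π j))⁻¹


lemma sqrt_pos' (hpos : ∀ i, 0 < π i) (i : Fin n) : 0 < Real.sqrt (π i) :=
  Real.sqrt_pos.2 (hpos i)

lemma sqrt_sq' (hpos : ∀ i, 0 < π i) (i : Fin n) :
    Real.sqrt (π i) * Real.sqrt (π i) = π i :=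
  Real.mul_self_sqrt (hpos i).le

lemma invariant (hrow : ∀ i, ∑ j, P i j = 1) (hrev : ∀ i j, π i * P i j = π j * P j i)
    (j : Fin n) : ∑ i, π i * P i j = π j := by
  have : ∀ i, π i * P i j = π j * P j i := fun i => hrev i j
  rw [Finset.sum_congr rfl (fun i _ => this i), ← Finset.mul_sum, hrow, mul_one]

lemma rowsum_pow (hrow : ∀ i, ∑ j, P i j = 1) (t : ℕ) (i : Fin n) :
    ∑ j, (P ^ t) i j = 1 := by
  induction t generalizing i with
  | zero => simp [Matrix.one_apply]
  | succ m ih =>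
    have : ∀ j, (P^(m+1)) i j = ∑ k, (P^m) i k * P k j := by
      intro j; rw [pow_succ, Matrix.mul_apply]
    rw [Finset.sum_congr rfl (fun j _ => this j), Finset.sum_comm]
    calc ∑ k, ∑ j, (P^m) i k * P k j = ∑ k, (P^m) i k * ∑ j, P k j := by
          apply Finset.sum_congr rfl; intro k _; rw [Finset.mul_sum]
      _ = ∑ k, (P^m) i k := by
          apply Finset.sum_congr rfl; intro k _; rw [hrow k, mul_one]
      _ = 1 := ih i

lemma invariant_pow (hrow : ∀ i, ∑ j, P i j = 1) (hrev : ∀ i j, π i * P i j = π j * P j i)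
    (t : ℕ) (j : Fin n) : ∑ i, π i * (P ^ t) i j = π j := by
  induction t generalizing j with
  | zero =>
    simp [Matrix.one_apply]
  | succ m ih =>
    have : ∀ i, π i * (P^(m+1)) i j = ∑ k, (π i * (P^m) i k) * P k j := by
      intro i; rw [pow_succ, Matrix.mul_apply, Finset.mul_sum]
      apply Finset.sum_congr rfl; intro k _; ring
    rw [Finset.sum_congr rfl (fun i _ => this i), Finset.sum_comm]
    calc ∑ k, ∑ i, (π i * (P^m) i k) * P k j
        = ∑ k, (∑ i, π i * (P^m) i k) * P k j := by
          apply Finset.sum_congr rfl; intro k _; rw [Finset.sum_mul]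
      _ = ∑ k, π k * P k j := by
          apply Finset.sum_congr rfl; intro k _; rw [ih k]
      _ = π j := invariant hrow hrev j

lemma symmMat_pow_apply (hpos : ∀ i, 0 < π i) (t : ℕ) (i j : Fin n) :
    ((symmMat π P) ^ t) i j = Real.sqrt (π i) * (P ^ t) i j * (Real.sqrt (π j))⁻¹ := by
  induction t generalizing i j with
  | zero =>
    by_cases h : i = j
    · subst h; simp [Matrix.one_apply, mul_inv_cancel₀ (sqrt_pos' hpos i).ne']
    · simp [Matrix.one_apply, h]
  | succ m ih =>
    rw [pow_succ, Matrix.mul_apply, pow_succ, Matrix.mul_apply]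
    have hr : Real.sqrt (π i) * (∑ k, (P^m) i k * P k j) * (Real.sqrt (π j))⁻¹
        = ∑ k, Real.sqrt (π i) * ((P^m) i k * P k j) * (Real.sqrt (π j))⁻¹ := by
      rw [Finset.mul_sum, Finset.sum_mul]
    rw [hr]
    apply Finset.sum_congr rfl
    intro k _
    rw [ih, symmMat]
    have hk := (sqrt_pos' hpos k).ne'
    have hck : (Real.sqrt (π k))⁻¹ * Real.sqrt (π k) = 1 := inv_mul_cancel₀ hk
    show (Real.sqrt (π i) * (P ^ m) i k * (Real.sqrt (π k))⁻¹)
        * (Real.sqrt (π k) * P k j * (Real.sqrt (π j))⁻¹)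
        = Real.sqrt (π i) * ((P ^ m) i k * P k j) * (Real.sqrt (π j))⁻¹
    linear_combination (Real.sqrt (π i) * (P ^ m) i k * P k j * (Real.sqrt (π j))⁻¹) * hck

lemma symmMat_isHermitian (hpos : ∀ i, 0 < π i)
    (hrev : ∀ i j, π i * P i j = π j * P j i) : (symmMat π P).IsHermitian := by
  rw [Matrix.IsHermitian]
  ext i j
  simp only [Matrix.conjTranspose_apply, symmMat, Matrix.of_apply, star_trivial]
  have hi := (sqrt_pos' hpos i).ne'
  have hj := (sqrt_pos' hpos j).ne'
  have h1 : Real.sqrt (π j) * Real.sqrt (π j) * P j i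
      = Real.sqrt (π i) * Real.sqrt (π i) * P i j := by
    rw [sqrt_sq' hpos, sqrt_sq' hpos]
    exact (hrev i j).symm
  field_simp
  linear_combination h1

lemma quad_form (hpos : ∀ i, 0 < π i) (x : Fin n → ℝ) :
    x ⬝ᵥ ((symmMat π P) *ᵥ x)
      = ∑ i, ∑ j, π i * P i j * (x i * (Real.sqrt (π i))⁻¹) * (x j * (Real.sqrt (π j))⁻¹) := by
  rw [dotProduct]
  apply Finset.sum_congr rfl
  intro i _
  rw [Matrix.mulVec, dotProduct, Finset.mul_sum]
  apply Finset.sum_congr rfl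
  intro j _
  simp only [symmMat, Matrix.of_apply]
  have hi := (sqrt_pos' hpos i).ne'
  have hj := (sqrt_pos' hpos j).ne'
  have hsq : Real.sqrt (π i) * Real.sqrt (π i) = π i := sqrt_sq' hpos i
  field_simp
  linear_combination (x i * P i j * x j) * hsq

lemma sum_quad_id (hrow : ∀ i, ∑ j, P i j = 1) (hrev : ∀ i j, π i * P i j = π j * P j i)
    (u : Fin n → ℝ) :
    ∑ i, ∑ j, π i * P i j * u i * u j
      = (∑ i, π i * u i^2) - (1/2) * ∑ i, ∑ j, π i * P i j * (u i - u j)^2 := by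
  have e1 : ∑ i, ∑ j, π i * P i j * u i^2 = ∑ i, π i * u i^2 := by
    apply Finset.sum_congr rfl
    intro i _
    calc ∑ j, π i * P i j * u i^2 = (π i * u i^2) * ∑ j, P i j := by
          rw [Finset.mul_sum]; apply Finset.sum_congr rfl; intro j _; ring
      _ = π i * u i^2 := by rw [hrow i, mul_one]
  have e2 : ∑ i, ∑ j, π i * P i j * u j^2 = ∑ i, π i * u i^2 := by
    rw [Finset.sum_comm]
    apply Finset.sum_congr rfl
    intro j _
    calc ∑ i, π i * P i j * u j^2 = (∑ i, π i * P i j) * u j^2 := by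
          rw [Finset.sum_mul]
      _ = π j * u j^2 := by rw [invariant hrow hrev j]
  have expand : ∑ i, ∑ j, π i * P i j * (u i - u j)^2
      = ∑ i, ∑ j, (π i * P i j * u i^2 + π i * P i j * u j^2 - 2*(π i * P i j * u i * u j)) := by
    apply Finset.sum_congr rfl; intro i _
    apply Finset.sum_congr rfl; intro j _
    ring
  rw [expand] at *
  have split : ∑ i, ∑ j, (π i * P i j * u i^2 + π i * P i j * u j^2 - 2*(π i * P i j * u i * u j))
      = (∑ i, ∑ j, π i * P i j * u i^2) + (∑ i, ∑ j, π i * P i j * u j^2)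
        - 2 * (∑ i, ∑ j, π i * P i j * u i * u j) := by
    rw [Finset.mul_sum]
    rw [← Finset.sum_add_distrib, ← Finset.sum_sub_distrib]
    apply Finset.sum_congr rfl
    intro i _
    rw [Finset.mul_sum, ← Finset.sum_add_distrib, ← Finset.sum_sub_distrib]
  rw [split, e1, e2]
  ring

lemma sum_quad_id_plus (hrow : ∀ i, ∑ j, P i j = 1) (hrev : ∀ i j, π i * P i j = π j * P j i)
    (u : Fin n → ℝ) :
    ∑ i, ∑ j, π i * P i j * u i * u j
      = -(∑ i, π i * u i^2) + (1/2) * ∑ i, ∑ j, π i * P i j * (u i + u j)^2 := by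
  have e1 : ∑ i, ∑ j, π i * P i j * u i^2 = ∑ i, π i * u i^2 := by
    apply Finset.sum_congr rfl
    intro i _
    calc ∑ j, π i * P i j * u i^2 = (π i * u i^2) * ∑ j, P i j := by
          rw [Finset.mul_sum]; apply Finset.sum_congr rfl; intro j _; ring
      _ = π i * u i^2 := by rw [hrow i, mul_one]
  have e2 : ∑ i, ∑ j, π i * P i j * u j^2 = ∑ i, π i * u i^2 := by
    rw [Finset.sum_comm]
    apply Finset.sum_congr rfl
    intro j _
    calc ∑ i, π i * P i j * u j^2 = (∑ i, π i * P i j) * u j^2 := by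
          rw [Finset.sum_mul]
      _ = π j * u j^2 := by rw [invariant hrow hrev j]
  have expand : ∑ i, ∑ j, π i * P i j * (u i + u j)^2
      = ∑ i, ∑ j, (π i * P i j * u i^2 + π i * P i j * u j^2 + 2*(π i * P i j * u i * u j)) := by
    apply Finset.sum_congr rfl; intro i _
    apply Finset.sum_congr rfl; intro j _
    ring
  rw [expand]
  have split : ∑ i, ∑ j, (π i * P i j * u i^2 + π i * P i j * u j^2 + 2*(π i * P i j * u i * u j))
      = (∑ i, ∑ j, π i * P i j * u i^2) + (∑ i, ∑ j, π i * P i j * u j^2)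
        + 2 * (∑ i, ∑ j, π i * P i j * u i * u j) := by
    rw [Finset.mul_sum]
    rw [← Finset.sum_add_distrib, ← Finset.sum_add_distrib]
    apply Finset.sum_congr rfl
    intro i _
    rw [Finset.mul_sum, ← Finset.sum_add_distrib, ← Finset.sum_add_distrib]
  rw [split, e1, e2]
  ring

lemma norm_sq_form (hpos : ∀ i, 0 < π i) (x : Fin n → ℝ) :
    x ⬝ᵥ x = ∑ i, π i * (x i * (Real.sqrt (π i))⁻¹)^2 := by
  rw [dotProduct]
  apply Finset.sum_congr rfl
  intro i _
  have hi := (sqrt_pos' hpos i).ne'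
  have hsq : Real.sqrt (π i) * Real.sqrt (π i) = π i := sqrt_sq' hpos i
  field_simp
  linear_combination (x i * x i) * hsq

lemma quad_ub (hpos : ∀ i, 0 < π i) (hnn : ∀ i j, 0 ≤ P i j)
    (hrow : ∀ i, ∑ j, P i j = 1) (hrev : ∀ i j, π i * P i j = π j * P j i)
    (x : Fin n → ℝ) : x ⬝ᵥ ((symmMat π P) *ᵥ x) ≤ x ⬝ᵥ x := by
  set u : Fin n → ℝ := fun i => x i * (Real.sqrt (π i))⁻¹ with hu
  have h1 : x ⬝ᵥ ((symmMat π P) *ᵥ x) = ∑ i, ∑ j, π i * P i j * u i * u j :=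
    quad_form hpos x
  rw [h1, sum_quad_id hrow hrev u, norm_sq_form hpos x]
  have hnneg : 0 ≤ ∑ i, ∑ j, π i * P i j * (u i - u j)^2 := by
    apply Finset.sum_nonneg; intro i _
    apply Finset.sum_nonneg; intro j _
    exact mul_nonneg (mul_nonneg (hpos i).le (hnn i j)) (sq_nonneg _)
  linarith

lemma quad_lb (hpos : ∀ i, 0 < π i) (hnn : ∀ i j, 0 ≤ P i j)
    (hrow : ∀ i, ∑ j, P i j = 1) (hrev : ∀ i j, π i * P i j = π j * P j i)
    (x : Fin n → ℝ) : -(x ⬝ᵥ x) ≤ x ⬝ᵥ ((symmMat π P) *ᵥ x) := by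
  set u : Fin n → ℝ := fun i => x i * (Real.sqrt (π i))⁻¹ with hu
  have h1 : x ⬝ᵥ ((symmMat π P) *ᵥ x) = ∑ i, ∑ j, π i * P i j * u i * u j :=
    quad_form hpos x
  rw [h1, sum_quad_id_plus hrow hrev u, norm_sq_form hpos x]
  have hnneg : 0 ≤ ∑ i, ∑ j, π i * P i j * (u i + u j)^2 := by
    apply Finset.sum_nonneg; intro i _
    apply Finset.sum_nonneg; intro j _
    exact mul_nonneg (mul_nonneg (hpos i).le (hnn i j)) (sq_nonneg _)
  linarith

lemma quad_peskun {P₁ P₂ : Matrix (Fin n) (Fin n) ℝ} (hpos : ∀ i, 0 < π i)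
    (h1row : ∀ i, ∑ j, P₁ i j = 1) (h2row : ∀ i, ∑ j, P₂ i j = 1)
    (h1rev : ∀ i j, π i * P₁ i j = π j * P₁ j i)
    (h2rev : ∀ i j, π i * P₂ i j = π j * P₂ j i)
    (hdom : ∀ i j, i ≠ j → P₁ i j ≤ P₂ i j)
    (x : Fin n → ℝ) : x ⬝ᵥ ((symmMat π P₂) *ᵥ x) ≤ x ⬝ᵥ ((symmMat π P₁) *ᵥ x) := by
  set u : Fin n → ℝ := fun i => x i * (Real.sqrt (π i))⁻¹ with hu
  rw [quad_form hpos x, quad_form hpos x,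
    sum_quad_id h1row h1rev u, sum_quad_id h2row h2rev u]
  have key : ∑ i, ∑ j, π i * P₁ i j * (u i - u j)^2
      ≤ ∑ i, ∑ j, π i * P₂ i j * (u i - u j)^2 := by
    apply Finset.sum_le_sum; intro i _
    apply Finset.sum_le_sum; intro j _
    by_cases h : i = j
    · subst h; simp
    · have h1 : P₁ i j ≤ P₂ i j := hdom i j h
      have h2 : (0:ℝ) ≤ (u i - u j)^2 := sq_nonneg _
      have h3 : (0:ℝ) ≤ π i := (hpos i).le
      nlinarith [mul_nonneg (mul_nonneg h3 (sub_nonneg.2 h1)) h2]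
  linarith

lemma autocov_eq (hpos : ∀ i, 0 < π i) (hsum : ∑ i, π i = 1)
    (hrow : ∀ i, ∑ j, P i j = 1) (hrev : ∀ i j, π i * P i j = π j * P j i)
    (f : Fin n → ℝ) (t : ℕ) :
    ((∑ i, ∑ j, π i * f i * (P ^ t) i j * f j) - (∑ i, π i * f i) ^ 2)
      = (fun i => Real.sqrt (π i) * (f i - ∑ l, π l * f l))
        ⬝ᵥ (((symmMat π P) ^ t) *ᵥ (fun i => Real.sqrt (π i) * (f i - ∑ l, π l * f l))) := by
  set μ : ℝ := ∑ l, π l * f l with hμ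
  set g : Fin n → ℝ := fun i => Real.sqrt (π i) * (f i - μ) with hg
  -- RHS equals centered double sum
  have hrhs : g ⬝ᵥ (((symmMat π P) ^ t) *ᵥ g)
      = ∑ i, ∑ j, π i * (f i - μ) * (P ^ t) i j * (f j - μ) := by
    rw [dotProduct]
    apply Finset.sum_congr rfl
    intro i _
    rw [Matrix.mulVec, dotProduct, Finset.mul_sum]
    apply Finset.sum_congr rfl
    intro j _
    rw [symmMat_pow_apply hpos]
    have hj := (sqrt_pos' hpos j).ne'
    have hsqi : Real.sqrt (π i) * Real.sqrt (π i) = π i := sqrt_sq' hpos i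
    show (Real.sqrt (π i) * (f i - μ)) * ((Real.sqrt (π i) * (P^t) i j * (Real.sqrt (π j))⁻¹)
        * (Real.sqrt (π j) * (f j - μ))) = π i * (f i - μ) * (P ^ t) i j * (f j - μ)
    field_simp
    linear_combination ((f i - μ) * (P^t) i j * (f j - μ)) * hsqi
  rw [hrhs]
  -- expand centered sum
  have hexp : ∀ i j, π i * (f i - μ) * (P ^ t) i j * (f j - μ)
      = π i * f i * (P ^ t) i j * f j - μ * (π i * (P^t) i j * f j)
        - μ * (π i * f i * (P^t) i j) + μ * μ * (π i * (P^t) i j) := by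
    intro i j; ring
  have hsplit : ∑ i, ∑ j, π i * (f i - μ) * (P ^ t) i j * (f j - μ)
      = (∑ i, ∑ j, π i * f i * (P ^ t) i j * f j)
        - μ * (∑ i, ∑ j, π i * (P^t) i j * f j)
        - μ * (∑ i, ∑ j, π i * f i * (P^t) i j)
        + μ * μ * (∑ i, ∑ j, π i * (P^t) i j) := by
    rw [Finset.mul_sum, Finset.mul_sum, Finset.mul_sum]
    rw [← Finset.sum_sub_distrib, ← Finset.sum_sub_distrib, ← Finset.sum_add_distrib]
    apply Finset.sum_congr rfl
    intro i _
    rw [Finset.mul_sum, Finset.mul_sum, Finset.mul_sum]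
    rw [← Finset.sum_sub_distrib, ← Finset.sum_sub_distrib, ← Finset.sum_add_distrib]
    apply Finset.sum_congr rfl
    intro j _
    exact hexp i j
  rw [hsplit]
  have hB : ∑ i, ∑ j, π i * (P^t) i j * f j = μ := by
    rw [Finset.sum_comm]
    calc ∑ j, ∑ i, π i * (P^t) i j * f j = ∑ j, (∑ i, π i * (P^t) i j) * f j := by
          apply Finset.sum_congr rfl; intro j _; rw [Finset.sum_mul]
      _ = ∑ j, π j * f j := by
          apply Finset.sum_congr rfl; intro j _; rw [invariant_pow hrow hrev t j]
      _ = μ := rfl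
  have hC : ∑ i, ∑ j, π i * f i * (P^t) i j = μ := by
    calc ∑ i, ∑ j, π i * f i * (P^t) i j = ∑ i, (π i * f i) * ∑ j, (P^t) i j := by
          apply Finset.sum_congr rfl; intro i _; rw [Finset.mul_sum]
      _ = ∑ i, π i * f i := by
          apply Finset.sum_congr rfl; intro i _; rw [rowsum_pow hrow t i, mul_one]
      _ = μ := rfl
  have hD : ∑ i, ∑ j, π i * (P^t) i j = ∑ i, π i := by
    apply Finset.sum_congr rfl; intro i _
    rw [← Finset.mul_sum, rowsum_pow hrow t i, mul_one]
  rw [hB, hC, hD, hsum]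
  ring

lemma herm_trans {S : Matrix (Fin n) (Fin n) ℝ} (hS : S.IsHermitian) : Sᵀ = S := by
  ext i j
  have := congrFun (congrFun hS.eq i) j
  simpa [Matrix.conjTranspose_apply] using this

lemma quad_resolvent (S : Matrix (Fin n) (Fin n) ℝ) (r : ℝ) (x : Fin n → ℝ) :
    x ⬝ᵥ ((1 - r • S) *ᵥ x) = x ⬝ᵥ x - r * (x ⬝ᵥ (S *ᵥ x)) := by
  rw [Matrix.sub_mulVec, Matrix.one_mulVec, dotProduct_sub,
    Matrix.smul_mulVec, dotProduct_smul]
  simp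

lemma resolvent_unit (S : Matrix (Fin n) (Fin n) ℝ) (hS : S.IsHermitian)
    (hub : ∀ x : Fin n → ℝ, x ⬝ᵥ (S *ᵥ x) ≤ x ⬝ᵥ x)
    (r : ℝ) (hr0 : 0 ≤ r) (hr1 : r < 1) :
    (1 - r • S).PosDef := by
  have hST := herm_trans hS
  have hherm : (1 - r • S).IsHermitian := by
    rw [Matrix.IsHermitian]
    ext i j
    have hs : S j i = S i j := by
      have := congrFun (congrFun hST i) j
      simpa [Matrix.transpose_apply] using this
    simp [Matrix.conjTranspose_apply, Matrix.one_apply, hs, eq_comm]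
  refine Matrix.PosDef.of_dotProduct_mulVec_pos hherm (fun x hx => ?_)
  have hxx0 : 0 ≤ x ⬝ᵥ x := Finset.sum_nonneg (fun i _ => mul_self_nonneg _)
  have hxx : 0 < x ⬝ᵥ x := by
    rcases eq_or_lt_of_le hxx0 with h | h
    · exact absurd (dotProduct_self_eq_zero.1 h.symm) hx
    · exact h
  have h2 := hub x
  have : (0:ℝ) < x ⬝ᵥ ((1 - r • S) *ᵥ x) := by
    rw [quad_resolvent]
    nlinarith
  simpa [star_trivial] using this

lemma const_mul_nat_eq_zero {A c : ℝ}
    (h : Tendsto (fun M : ℕ => A * M) atTop (nhds c)) : A = 0 := by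
  have h2 : Tendsto (fun M : ℕ => A * ((M:ℝ)+1)) atTop (nhds c) := by
    have := h.comp (tendsto_add_atTop_nat 1)
    apply this.congr
    intro M
    simp only [Function.comp]
    push_cast
    ring
  have h3 := h2.sub h
  have heq : (fun M : ℕ => A * ((M:ℝ)+1) - A * M) = fun _ => A := by funext M; ring
  rw [heq] at h3
  have := tendsto_nhds_unique h3 tendsto_const_nhds
  linarith



lemma kfun_one (M : ℕ) : kfun (1:ℝ) M = M := by
  rw [kfun]
  simp only [one_pow, Finset.sum_const, Finset.card_range, nsmul_eq_mul, mul_one]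
  rcases Nat.eq_zero_or_pos M with h | h
  · subst h; simp
  · have : (M:ℝ) ≠ 0 := by positivity
    field_simp

lemma chain_limit {n : ℕ} (a l : Fin n → ℝ) (ha : ∀ k, 0 ≤ a k)
    (hbd : ∀ k, -1 ≤ l k ∧ l k ≤ 1)
    (sv : ℕ → ℝ) (hsv : ∀ M, sv M = ∑ k, a k * kfun (l k) M)
    (v : ℝ) (hv : Tendsto sv atTop (nhds v)) :
    (∀ k, ¬ l k < 1 → a k = 0) ∧
      v = ∑ k, a k * (if l k < 1 then (1 + l k)/(1 - l k) else 0) := by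
  classical
  set Good : Finset (Fin n) := Finset.univ.filter (fun k => l k < 1) with hGood
  have hTgood : Tendsto (fun M => ∑ k ∈ Good, a k * kfun (l k) M) atTop
      (nhds (∑ k ∈ Good, a k * ((1 + l k)/(1 - l k)))) := by
    apply tendsto_finset_sum
    intro k hk
    rw [hGood, Finset.mem_filter] at hk
    exact (k_tendsto _ (hbd k).1 hk.2).const_mul _
  have hdecomp : ∀ M : ℕ, sv M = (∑ k ∈ Good, a k * kfun (l k) M)
      + (∑ k ∈ Finset.univ.filter (fun k => ¬ l k < 1), a k) * M := by
    intro M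
    rw [hsv M, ← Finset.sum_filter_add_sum_filter_not Finset.univ (fun k => l k < 1)]
    congr 1
    rw [Finset.sum_mul]
    apply Finset.sum_congr rfl
    intro k hk
    rw [Finset.mem_filter] at hk
    have hl1 : l k = 1 := le_antisymm (hbd k).2 (not_lt.1 hk.2)
    rw [hl1, kfun_one]
  have hAM : Tendsto (fun M : ℕ => (∑ k ∈ Finset.univ.filter (fun k => ¬ l k < 1), a k) * M)
      atTop (nhds (v - ∑ k ∈ Good, a k * ((1 + l k)/(1 - l k)))) := by
    apply (hv.sub hTgood).congr
    intro M
    rw [hdecomp M]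
    ring
  have hA0 := const_mul_nat_eq_zero hAM
  have hzero : ∀ k, ¬ l k < 1 → a k = 0 := by
    intro k hk
    exact (Finset.sum_eq_zero_iff_of_nonneg (fun k _ => ha k)).1 hA0 k
      (Finset.mem_filter.2 ⟨Finset.mem_univ _, hk⟩)
  refine ⟨hzero, ?_⟩
  have hL : Tendsto sv atTop
      (nhds (∑ k, a k * (if l k < 1 then (1 + l k)/(1 - l k) else 0))) := by
    apply Tendsto.congr (fun M => (hsv M).symm)
    apply tendsto_finset_sum
    intro k _
    by_cases hk : l k < 1
    · simpa [hk] using (k_tendsto _ (hbd k).1 hk).const_mul (a k)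
    · have ha0 := hzero k hk
      have : (fun M : ℕ => a k * kfun (l k) M) = fun _ => (0:ℝ) := by
        funext M; rw [ha0]; ring
      rw [this, ha0]
      simpa using tendsto_const_nhds
  exact tendsto_nhds_unique hv hL

lemma scaledVar_eq (hpos : ∀ i, 0 < π i) (hsum : ∑ i, π i = 1)
    (hrow : ∀ i, ∑ j, P i j = 1) (hrev : ∀ i j, π i * P i j = π j * P j i)
    (f : Fin n → ℝ) (a l : Fin n → ℝ)
    (hpow : ∀ t : ℕ, (fun i => Real.sqrt (π i) * (f i - ∑ l, π l * f l))
        ⬝ᵥ (((symmMat π P) ^ t) *ᵥ (fun i => Real.sqrt (π i) * (f i - ∑ l, π l * f l)))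
        = ∑ k, a k * (l k)^t)
    (M : ℕ) : scaledVar π f P M = ∑ k, a k * kfun (l k) M := by
  rw [scaledVar]
  have h1 : ∀ s t : ℕ, autocov π f P (Nat.dist s t) = ∑ k, a k * (l k) ^ (Nat.dist s t) := by
    intro s t
    rw [autocov, autocov_eq hpos hsum hrow hrev f, hpow]
  calc (1/(M:ℝ)) * ∑ s ∈ Finset.range M, ∑ t ∈ Finset.range M, autocov π f P (Nat.dist s t)
      = (1/(M:ℝ)) * ∑ s ∈ Finset.range M, ∑ t ∈ Finset.range M,
          ∑ k, a k * (l k) ^ (Nat.dist s t) := by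
        congr 1
        apply Finset.sum_congr rfl; intro s _
        apply Finset.sum_congr rfl; intro t _
        exact h1 s t
    _ = (1/(M:ℝ)) * ∑ k, ∑ s ∈ Finset.range M, ∑ t ∈ Finset.range M,
          a k * (l k) ^ (Nat.dist s t) := by
        congr 1
        rw [show (∑ s ∈ Finset.range M, ∑ t ∈ Finset.range M, ∑ k, a k * (l k) ^ (Nat.dist s t))
            = ∑ s ∈ Finset.range M, ∑ k, ∑ t ∈ Finset.range M, a k * (l k) ^ (Nat.dist s t) from
          Finset.sum_congr rfl (fun s _ => Finset.sum_comm)]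
        exact Finset.sum_comm
    _ = ∑ k, a k * kfun (l k) M := by
        rw [Finset.mul_sum]
        apply Finset.sum_congr rfl
        intro k _
        rw [kfun]
        have : ∑ s ∈ Finset.range M, ∑ t ∈ Finset.range M, a k * (l k) ^ (Nat.dist s t)
            = a k * ∑ s ∈ Finset.range M, ∑ t ∈ Finset.range M, (l k) ^ (Nat.dist s t) := by
          rw [Finset.mul_sum]
          apply Finset.sum_congr rfl
          intro s _
          rw [Finset.mul_sum]
        rw [this]
        ring

/-- Peskun's theorem: if `P₁` and `P₂` are irreducible
row-stochastic matrices, both reversible with respect to the positive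
probability vector `π`, and `P₂` dominates `P₁` in the Peskun order
(off-diagonal entrywise), then the asymptotic variance of the empirical mean of
any observable `f` under `P₂` is at most that under `P₁`. -/
theorem peskun_asymptotic_variance {n : ℕ} (hn : 1 ≤ n) (π : Fin n → ℝ)
    (hpos : ∀ i, 0 < π i) (hsum : ∑ i, π i = 1)
    (P₁ P₂ : Matrix (Fin n) (Fin n) ℝ)
    (h1nonneg : ∀ i j, 0 ≤ P₁ i j) (h1row : ∀ i, ∑ j, P₁ i j = 1)
    (h2nonneg : ∀ i j, 0 ≤ P₂ i j) (h2row : ∀ i, ∑ j, P₂ i j = 1)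
    (h1rev : ∀ i j, π i * P₁ i j = π j * P₁ j i)
    (h2rev : ∀ i j, π i * P₂ i j = π j * P₂ j i)
    (h1irr : ∀ i j, ∃ k, 1 ≤ k ∧ 0 < (P₁ ^ k) i j)
    (h2irr : ∀ i j, ∃ k, 1 ≤ k ∧ 0 < (P₂ ^ k) i j)
    (hdom : ∀ i j, i ≠ j → P₁ i j ≤ P₂ i j)
    (f : Fin n → ℝ) (v₁ v₂ : ℝ)
    (h1lim : Filter.Tendsto (scaledVar π f P₁) Filter.atTop (nhds v₁))
    (h2lim : Filter.Tendsto (scaledVar π f P₂) Filter.atTop (nhds v₂)) :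
    v₂ ≤ v₁ := by
  classical
  set g : Fin n → ℝ := fun i => Real.sqrt (π i) * (f i - ∑ l, π l * f l) with hg
  set S₁ := symmMat π P₁ with hS₁d
  set S₂ := symmMat π P₂ with hS₂d
  have hH₁ : S₁.IsHermitian := symmMat_isHermitian hpos h1rev
  have hH₂ : S₂.IsHermitian := symmMat_isHermitian hpos h2rev
  have hub₁ := quad_ub hpos h1nonneg h1row h1rev
  have hlb₁ := quad_lb hpos h1nonneg h1row h1rev
  have hub₂ := quad_ub hpos h2nonneg h2row h2rev
  have hlb₂ := quad_lb hpos h2nonneg h2row h2rev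
  obtain ⟨a₁, l₁, ha₁, hbd₁, hpow₁, hres₁⟩ := spectral_rep S₁ hH₁ g hub₁ hlb₁
  obtain ⟨a₂, l₂, ha₂, hbd₂, hpow₂, hres₂⟩ := spectral_rep S₂ hH₂ g hub₂ hlb₂
  -- chain limits
  obtain ⟨hzero₁, hv₁⟩ := chain_limit a₁ l₁ ha₁ hbd₁ (scaledVar π f P₁)
    (fun M => scaledVar_eq hpos hsum h1row h1rev f a₁ l₁ hpow₁ M) v₁ h1lim
  obtain ⟨hzero₂, hv₂⟩ := chain_limit a₂ l₂ ha₂ hbd₂ (scaledVar π f P₂)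
    (fun M => scaledVar_eq hpos hsum h2row h2rev f a₂ l₂ hpow₂ M) v₂ h2lim
  -- the resolvent sequence
  set r : ℕ → ℝ := fun m => (m:ℝ)/((m:ℝ)+1) with hrdef
  have hr0 : ∀ m, 0 ≤ r m := by
    intro m; rw [hrdef]; positivity
  have hr1 : ∀ m, r m < 1 := by
    intro m
    rw [hrdef]
    rw [div_lt_one (by positivity)]
    linarith
  have hrlim : Tendsto r atTop (nhds 1) := by
    have := tendsto_natCast_div_add_atTop (𝕜 := ℝ) 1
    exact this
  -- monotonicity of the resolvent quadratic forms
  have hmono : ∀ m : ℕ, g ⬝ᵥ ((1 - r m • S₂)⁻¹ *ᵥ g) ≤ g ⬝ᵥ ((1 - r m • S₁)⁻¹ *ᵥ g) := by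
    intro m
    have hPDA : (1 - r m • S₂).PosDef := resolvent_unit S₂ hH₂ hub₂ _ (hr0 m) (hr1 m)
    have hPDB : (1 - r m • S₁).PosDef := resolvent_unit S₁ hH₁ hub₁ _ (hr0 m) (hr1 m)
    apply inv_mono _ _ (herm_trans hPDA.1) (herm_trans hPDB.1)
    · intro x
      by_cases hx : x = 0
      · subst hx; simp
      · have := hPDB.dotProduct_mulVec_pos hx
        simpa [star, dotProduct] using this.le
    · exact hPDA.det_pos.ne'.isUnit
    · exact hPDB.det_pos.ne'.isUnit
    · intro x
      rw [quad_resolvent, quad_resolvent]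
      have hq := quad_peskun hpos h1row h2row h1rev h2rev hdom x
      have := mul_le_mul_of_nonneg_left hq (hr0 m)
      linarith
  -- limits of the resolvent forms
  set L₁' : ℝ := ∑ k, a₁ k * (if l₁ k < 1 then (1 - l₁ k)⁻¹ else 0) with hL₁'
  set L₂' : ℝ := ∑ k, a₂ k * (if l₂ k < 1 then (1 - l₂ k)⁻¹ else 0) with hL₂'
  have hWlim : ∀ (a l : Fin n → ℝ) (S : Matrix (Fin n) (Fin n) ℝ),
      (∀ k, -1 ≤ l k ∧ l k ≤ 1) → (∀ k, ¬ l k < 1 → a k = 0) →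
      (∀ ρ : ℝ, 0 ≤ ρ → ρ < 1 → g ⬝ᵥ ((1 - ρ • S)⁻¹ *ᵥ g) = ∑ k, a k * (1 - ρ * l k)⁻¹) →
      Tendsto (fun m : ℕ => g ⬝ᵥ ((1 - r m • S)⁻¹ *ᵥ g)) atTop
        (nhds (∑ k, a k * (if l k < 1 then (1 - l k)⁻¹ else 0))) := by
    intro a l S hbd hzero hres
    have hcongr : (fun m : ℕ => g ⬝ᵥ ((1 - r m • S)⁻¹ *ᵥ g))
        = fun m : ℕ => ∑ k, a k * (1 - r m * l k)⁻¹ := by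
      funext m
      exact hres (r m) (hr0 m) (hr1 m)
    rw [hcongr]
    apply tendsto_finset_sum
    intro k _
    by_cases hk : l k < 1
    · have hne : (1:ℝ) - l k ≠ 0 := by linarith
      have h1 : Tendsto (fun m : ℕ => 1 - r m * l k) atTop (nhds (1 - 1 * l k)) :=
        tendsto_const_nhds.sub (hrlim.mul_const (l k))
      rw [one_mul] at h1
      have h2 := (h1.inv₀ hne).const_mul (a k)
      simpa [hk] using h2
    · have ha0 := hzero k hk
      have : (fun m : ℕ => a k * (1 - r m * l k)⁻¹) = fun _ => (0:ℝ) := by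
        funext m; rw [ha0]; ring
      rw [this, ha0]
      simpa using tendsto_const_nhds
  have hW₁ := hWlim a₁ l₁ S₁ hbd₁ hzero₁ hres₁
  have hW₂ := hWlim a₂ l₂ S₂ hbd₂ hzero₂ hres₂
  have hL'le : L₂' ≤ L₁' := le_of_tendsto_of_tendsto' hW₂ hW₁ hmono
  -- total mass identity
  have hgg₁ : g ⬝ᵥ g = ∑ k, a₁ k := by
    have := hpow₁ 0
    simpa [Matrix.one_mulVec] using this
  have hgg₂ : g ⬝ᵥ g = ∑ k, a₂ k := by
    have := hpow₂ 0
    simpa [Matrix.one_mulVec] using this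
  -- express v in terms of L'
  have hkey : ∀ (a l : Fin n → ℝ), (∀ k, ¬ l k < 1 → a k = 0) →
      ∑ k, a k * (if l k < 1 then (1 + l k)/(1 - l k) else 0)
        = 2 * (∑ k, a k * (if l k < 1 then (1 - l k)⁻¹ else 0)) - ∑ k, a k := by
    intro a l hzero
    rw [Finset.mul_sum, ← Finset.sum_sub_distrib]
    apply Finset.sum_congr rfl
    intro k _
    by_cases hk : l k < 1
    · simp only [if_pos hk]
      have hne : (1:ℝ) - l k ≠ 0 := by linarith
      field_simp
      ring
    · rw [hzero k hk]
      simp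
  have e₁ : v₁ = 2 * L₁' - g ⬝ᵥ g := by
    rw [hv₁, hkey a₁ l₁ hzero₁, hgg₁, hL₁']
  have e₂ : v₂ = 2 * L₂' - g ⬝ᵥ g := by
    rw [hv₂, hkey a₂ l₂ hzero₂, hgg₂, hL₂']
  rw [e₁, e₂]
  linarith


end PeskunProof
end
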